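/- arXiv:2506.13634 — 10 statements merged into one kernel-verified Lean document; each statement's English description precedes it below -/
import Mathlib

section
/- Let (Y,d) be a metric space, p ∈ (1,∞), and let f : [0,1] → Y belong to AC^p(Y), with witness m : [0,1] → [0,∞) measurable satisfying ∫_0^1 m(r)^p dr < ∞ and d(f(u),f(v)) ≤ ∫_u^v m(r) dr for all 0 ≤ u ≤ v ≤ 1. Then for every h ∈ (0,1), ∫_0^{1−h} ( d(f(u+h),f(u)) / h )^p du ≤ ∫_0^1 m(r)^p dr. In particular, sup_{0<h<1} ∫_0^{1−h} ( d(f(u+h),f(u)) / h )^p du < ∞, i.e., the equivalence class of f lies in the Sobolev class W^{1,p}(Y). -/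
open MeasureTheory Set Filter
open scoped ENNReal

/-- Tonelli step: integrating the sliding-window integral of `F` over `[0,1-h]`
is at most `h` times the integral of `F` over `[0,1]`. -/
lemma sliding_window_lintegral (F : ℝ → ℝ≥0∞) (hF : Measurable F) {h : ℝ}
    (h0 : 0 < h) :
    ∫⁻ u in Icc (0:ℝ) (1 - h), ∫⁻ r in Ioc u (u + h), F r
      ≤ ENNReal.ofReal h * ∫⁻ r in Icc (0:ℝ) 1, F r := by
  set A : Set ℝ := Icc (0:ℝ) (1 - h) with hA
  set K : ℝ → ℝ → ℝ≥0∞ := fun u r => ({x : ℝ × ℝ | x.1 < x.2 ∧ x.2 ≤ x.1 + h}).indicator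
    (fun x => F x.2) (u, r) with hK
  have hKmeas : Measurable (Function.uncurry K) := by
    apply Measurable.indicator
    · exact hF.comp measurable_snd
    · exact (measurableSet_lt measurable_fst measurable_snd).inter
        (measurableSet_le measurable_snd (measurable_fst.add_const h))
  have h1 : ∀ u : ℝ, (∫⁻ r in Ioc u (u + h), F r) = ∫⁻ r, K u r := by
    intro u
    rw [← lintegral_indicator measurableSet_Ioc]
    refine lintegral_congr fun r => ?_
    simp [hK, Set.indicator_apply, Set.mem_Ioc, Set.mem_setOf_eq]
  have h2 : ∀ r : ℝ, (fun u => K u r) = (Ico (r - h) r).indicator (fun _ => F r) := by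
    intro r
    funext u
    simp only [hK, Set.indicator_apply, Set.mem_setOf_eq, Set.mem_Ico]
    congr 1
    simp only [eq_iff_iff]
    constructor
    · rintro ⟨h1', h2'⟩; exact ⟨by linarith, h1'⟩
    · rintro ⟨h1', h2'⟩; exact ⟨h2', by linarith⟩
  calc ∫⁻ u in A, ∫⁻ r in Ioc u (u + h), F r
      = ∫⁻ u in A, ∫⁻ r, K u r := by simp_rw [h1]
    _ = ∫⁻ r, ∫⁻ u in A, K u r := by
        exact lintegral_lintegral_swap (hKmeas.aemeasurable)
    _ = ∫⁻ r, F r * volume (Ico (r - h) r ∩ A) := by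
        congr 1
        funext r
        rw [h2 r, lintegral_indicator measurableSet_Ico,
          Measure.restrict_restrict measurableSet_Ico, setLIntegral_const]
    _ ≤ ∫⁻ r, (Ioc (0:ℝ) 1).indicator (fun r => F r * ENNReal.ofReal h) r := by
        apply lintegral_mono
        intro r
        by_cases hr : r ∈ Ioc (0:ℝ) 1
        · rw [Set.indicator_of_mem hr]
          apply mul_le_mul_right
          calc volume (Ico (r - h) r ∩ A) ≤ volume (Ico (r - h) r) :=
                measure_mono Set.inter_subset_left
            _ = ENNReal.ofReal (r - (r - h)) := by rw [Real.volume_Ico]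
            _ = ENNReal.ofReal h := by ring_nf
        · rw [Set.indicator_of_notMem hr]
          have : Ico (r - h) r ∩ A = ∅ := by
            ext u
            simp only [Set.mem_inter_iff, Set.mem_Ico, hA, Set.mem_Icc, Set.mem_empty_iff_false,
              iff_false]
            rintro ⟨⟨hu1, hu2⟩, hu3, hu4⟩
            simp only [Set.mem_Ioc, not_and, not_le] at hr
            rcases le_or_gt r 0 with hr0 | hr0
            · linarith
            · have := hr hr0; linarith
          simp only [this, measure_empty, mul_zero, le_refl]
    _ = ∫⁻ r in Ioc (0:ℝ) 1, F r * ENNReal.ofReal h := by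
        rw [lintegral_indicator measurableSet_Ioc]
    _ = ENNReal.ofReal h * ∫⁻ r in Ioc (0:ℝ) 1, F r := by
        rw [lintegral_mul_const' _ _ ENNReal.ofReal_ne_top, mul_comm]
    _ ≤ ENNReal.ofReal h * ∫⁻ r in Icc (0:ℝ) 1, F r := by
        exact mul_le_mul_right (lintegral_mono' (Measure.restrict_mono Ioc_subset_Icc_self le_rfl)
          le_rfl) _

/-- An `AC^p` curve (with witness `m`) has shifted `p`-energy bounded by
`∫_0^1 m^p`, uniformly in the shift `h ∈ (0,1)`; in particular its Sobolev `W^{1,p}`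
energy is finite. -/
theorem acp_curve_sobolev_energy_bound {Y : Type*} [MetricSpace Y]
    (p : ℝ) (hp : 1 < p) (f : ℝ → Y) (m : ℝ → ℝ)
    (hm_meas : Measurable m) (hm_nonneg : ∀ r ∈ Icc (0:ℝ) 1, 0 ≤ m r)
    (hm_fin : ∫⁻ r in Icc (0:ℝ) 1, ENNReal.ofReal (m r ^ p) < ⊤)
    (hac : ∀ u v : ℝ, 0 ≤ u → u ≤ v → v ≤ 1 →
      dist (f u) (f v) ≤ ∫ r in u..v, m r) :
    (∀ h : ℝ, 0 < h → h < 1 →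
      ∫⁻ u in Icc (0:ℝ) (1 - h), ENNReal.ofReal ((dist (f (u + h)) (f u) / h) ^ p)
        ≤ ∫⁻ r in Icc (0:ℝ) 1, ENNReal.ofReal (m r ^ p)) ∧
    (⨆ (h : ℝ) (_ : 0 < h) (_ : h < 1),
      ∫⁻ u in Icc (0:ℝ) (1 - h), ENNReal.ofReal ((dist (f (u + h)) (f u) / h) ^ p)) < ⊤ := by
  set F : ℝ → ℝ≥0∞ := fun r => ENNReal.ofReal (m r ^ p) with hF
  have hFmeas : Measurable F := by
    exact (hm_meas.pow measurable_const).ennreal_ofReal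
  have hp0 : (0:ℝ) < p := by linarith
  have key : ∀ h : ℝ, 0 < h → h < 1 →
      ∫⁻ u in Icc (0:ℝ) (1 - h), ENNReal.ofReal ((dist (f (u + h)) (f u) / h) ^ p)
        ≤ ∫⁻ r in Icc (0:ℝ) 1, F r := by
    intro h hh0 hh1
    set c : ℝ≥0∞ := ENNReal.ofReal h with hc
    have hc0 : c ≠ 0 := by simp [hc, ENNReal.ofReal_eq_zero, not_le, hh0]
    have hctop : c ≠ ⊤ := ENNReal.ofReal_ne_top
    -- pointwise estimate
    have point : ∀ u ∈ Icc (0:ℝ) (1 - h),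
        ENNReal.ofReal ((dist (f (u + h)) (f u) / h) ^ p)
          ≤ (∫⁻ r in Ioc u (u + h), F r) / c := by
      intro u hu
      obtain ⟨hu0, hu1⟩ := hu
      have huv : u ≤ u + h := by linarith
      have huh1 : u + h ≤ 1 := by linarith
      set d : ℝ := dist (f (u + h)) (f u) with hd
      have hd0 : 0 ≤ d := dist_nonneg
      have hsub : Ioc u (u + h) ⊆ Icc (0:ℝ) 1 := fun r hr =>
        ⟨le_trans hu0 hr.1.le, le_trans hr.2 huh1⟩
      -- step 1 : ofReal d ≤ ∫⁻ ofReal (m r)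
      have step1 : ENNReal.ofReal d ≤ ∫⁻ r in Ioc u (u + h), ENNReal.ofReal (m r) := by
        have hdle : d ≤ ∫ r in Ioc u (u + h), m r := by
          rw [hd, dist_comm]
          calc dist (f u) (f (u + h)) ≤ ∫ r in u..(u + h), m r := hac u (u + h) hu0 huv huh1
            _ = ∫ r in Ioc u (u + h), m r := intervalIntegral.integral_of_le huv
        by_cases hint : IntegrableOn m (Ioc u (u + h)) volume
        · calc ENNReal.ofReal d ≤ ENNReal.ofReal (∫ r in Ioc u (u + h), m r) :=
              ENNReal.ofReal_le_ofReal hdle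
            _ = ∫⁻ r in Ioc u (u + h), ENNReal.ofReal (m r) := by
              apply ofReal_integral_eq_lintegral_ofReal hint
              filter_upwards [ae_restrict_mem measurableSet_Ioc] with r hr
              exact hm_nonneg r (hsub hr)
        · rw [show (∫ r in Ioc u (u + h), m r) = 0 from integral_undef hint] at hdle
          have : d = 0 := le_antisymm hdle hd0
          simp [this]
      -- step 2 : Hölder
      set a : ℝ≥0∞ := ∫⁻ r in Ioc u (u + h), F r with ha
      have hq := Real.HolderConjugate.conjExponent hp
      set q : ℝ := Real.conjExponent p with hqdef
      have step2 : ∫⁻ r in Ioc u (u + h), ENNReal.ofReal (m r)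
          ≤ a ^ (1 / p) * c ^ (1 / q) := by
        have := ENNReal.lintegral_mul_le_Lp_mul_Lq (volume.restrict (Ioc u (u + h))) hq
          (f := fun r => ENNReal.ofReal (m r)) (g := fun _ => 1)
          (ENNReal.measurable_ofReal.comp hm_meas).aemeasurable aemeasurable_const
        simp only [mul_one, ENNReal.one_rpow, lintegral_const, Measure.restrict_apply,
          MeasurableSet.univ, Set.univ_inter, Pi.mul_apply, one_mul] at this
        calc ∫⁻ r in Ioc u (u + h), ENNReal.ofReal (m r)
            ≤ (∫⁻ r in Ioc u (u + h), (ENNReal.ofReal (m r)) ^ p) ^ (1 / p)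
              * (volume (Ioc u (u + h))) ^ (1 / q) := this
          _ = a ^ (1 / p) * c ^ (1 / q) := by
            congr 1
            · congr 1
              apply setLIntegral_congr_fun measurableSet_Ioc
              intro r hr
              simp only [hF]
              rw [ENNReal.ofReal_rpow_of_nonneg (hm_nonneg r (hsub hr)) hp0.le]
            · rw [Real.volume_Ioc]
              congr 1
              rw [hc]; ring_nf
      have step3 : ENNReal.ofReal d ≤ a ^ (1 / p) * c ^ (1 / q) := step1.trans step2
      -- final arithmetic
      have hLHS : ENNReal.ofReal ((d / h) ^ p) = ENNReal.ofReal d ^ p / c ^ p := by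
        rw [← ENNReal.ofReal_rpow_of_nonneg (div_nonneg hd0 hh0.le) hp0.le,
          ENNReal.ofReal_div_of_pos hh0, ENNReal.div_rpow_of_nonneg _ _ hp0.le]
      rw [hLHS]
      have step4 : ENNReal.ofReal d ^ p ≤ a * c ^ (p / q) := by
        calc ENNReal.ofReal d ^ p ≤ (a ^ (1 / p) * c ^ (1 / q)) ^ p :=
            ENNReal.rpow_le_rpow step3 hp0.le
          _ = a ^ (1 / p * p) * c ^ (1 / q * p) := by
            rw [ENNReal.mul_rpow_of_nonneg _ _ hp0.le, ← ENNReal.rpow_mul, ← ENNReal.rpow_mul]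
          _ = a * c ^ (p / q) := by
            rw [one_div, inv_mul_cancel₀ (ne_of_gt hp0), ENNReal.rpow_one]
            congr 1
            ring
      calc ENNReal.ofReal d ^ p / c ^ p ≤ a * c ^ (p / q) / c ^ p :=
          ENNReal.div_le_div_right step4 _
        _ = a * (c ^ (p / q) / c ^ p) := by rw [mul_div_assoc]
        _ = a * c ^ (p / q - p) := by rw [ENNReal.rpow_sub _ _ hc0 hctop]
        _ = a * c ^ (-1 : ℝ) := by
            congr 1
            have : p / q = p - 1 := by
              rw [hqdef, Real.conjExponent]
              field_simp
            rw [this]; ring_nf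
        _ = a / c := by rw [ENNReal.rpow_neg_one, div_eq_mul_inv]
    -- integrate the pointwise bound
    calc ∫⁻ u in Icc (0:ℝ) (1 - h), ENNReal.ofReal ((dist (f (u + h)) (f u) / h) ^ p)
        ≤ ∫⁻ u in Icc (0:ℝ) (1 - h), (∫⁻ r in Ioc u (u + h), F r) / c := by
          apply setLIntegral_mono' measurableSet_Icc point
      _ = ∫⁻ u in Icc (0:ℝ) (1 - h), (∫⁻ r in Ioc u (u + h), F r) * c⁻¹ := by
          simp_rw [div_eq_mul_inv]
      _ = (∫⁻ u in Icc (0:ℝ) (1 - h), ∫⁻ r in Ioc u (u + h), F r) * c⁻¹ := by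
          exact lintegral_mul_const' _ _ (ENNReal.inv_ne_top.mpr hc0)
      _ ≤ (c * ∫⁻ r in Icc (0:ℝ) 1, F r) * c⁻¹ := by
          exact mul_le_mul_left (sliding_window_lintegral F hFmeas hh0) _
      _ = ∫⁻ r in Icc (0:ℝ) 1, F r := by
          rw [mul_comm c _, mul_assoc, ENNReal.mul_inv_cancel hc0 hctop, mul_one]
  refine ⟨key, ?_⟩
  refine lt_of_le_of_lt ?_ hm_fin
  exact iSup_le fun h => iSup_le fun h1 => iSup_le fun h2 => key h h1 h2
end

section
/- Let (X,d) be a metric space, p ∈ [1,∞), N ∈ ℕ with N ≥ 1, and let σ : [0,1] → X be the piecewise-constant function built from points x_0,…,x_{2^N} ∈ X. Then for every h ∈ (0, 1/2^N), ∫_0^{1−h} d(σ(u+h),σ(u))^p du ≤ h · Σ_{i=0}^{2^N−1} d(x_i, x_{i+1})^p. -/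
open MeasureTheory Set Filter
open scoped ENNReal

/-- small-shift estimate for the piecewise-constant interpolation `σ`
built from points `x 0, …, x (2^N)` on the dyadic grid of mesh `2^{-N}`. -/
theorem piecewise_constant_small_shift {X : Type*} [MetricSpace X]
    (p : ℝ) (hp : 1 ≤ p) (N : ℕ) (hN : 1 ≤ N) (x : ℕ → X) (σ : ℝ → X)
    (hσ : ∀ i : ℕ, i < 2 ^ N → ∀ u : ℝ,
      (i : ℝ) / 2 ^ N ≤ u → u < ((i : ℝ) + 1) / 2 ^ N → σ u = x i)
    (hσ1 : σ 1 = x (2 ^ N)) :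
    ∀ h : ℝ, 0 < h → h < 1 / 2 ^ N →
      ∫⁻ u in Icc (0:ℝ) (1 - h), ENNReal.ofReal (dist (σ (u + h)) (σ u) ^ p)
        ≤ ENNReal.ofReal
            (h * ∑ i ∈ Finset.range (2 ^ N), dist (x i) (x (i + 1)) ^ p) := by
  intro h h0 h1
  have hn : (0:ℝ) < 2 ^ N := by positivity
  have hp0 : p ≠ 0 := by linarith
  set F : ℝ → ℝ≥0∞ := fun u => ENNReal.ofReal (dist (σ (u + h)) (σ u) ^ p) with hF
  set g : ℝ → ℝ≥0∞ := fun u => ∑ i ∈ Finset.range (2 ^ N),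
    (Set.Ico (((i:ℝ) + 1) / 2 ^ N - h) (((i:ℝ) + 1) / 2 ^ N)).indicator
      (fun _ => ENNReal.ofReal (dist (x i) (x (i + 1)) ^ p)) u with hg
  have step1 : ∫⁻ u in Icc (0:ℝ) (1 - h), F u ≤ ∫⁻ u, g u := by
    have heq : ∫⁻ u in Icc (0:ℝ) (1 - h), F u = ∫⁻ u in Ico (0:ℝ) (1 - h), F u :=
      (setLIntegral_congr Ico_ae_eq_Icc).symm
    rw [heq, ← lintegral_indicator measurableSet_Ico F]
    refine lintegral_mono fun u => ?_
    by_cases hu : u ∈ Ico (0:ℝ) (1 - h)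
    · rw [Set.indicator_of_mem hu]
      obtain ⟨hu0, hu1⟩ := hu
      set i : ℕ := ⌊u * 2 ^ N⌋₊ with hi
      have hile : (i : ℝ) ≤ u * 2 ^ N := Nat.floor_le (by positivity)
      have hilt : u * 2 ^ N < (i : ℝ) + 1 := Nat.lt_floor_add_one _
      have hiN : i < 2 ^ N := by
        have : u * 2 ^ N < (2 ^ N : ℕ) := by
          push_cast
          nlinarith
        exact Nat.floor_lt (by positivity) |>.2 this
      have hul : (i : ℝ) / 2 ^ N ≤ u := by
        rw [div_le_iff₀ hn]; linarith
      have hur : u < ((i : ℝ) + 1) / 2 ^ N := by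
        rw [lt_div_iff₀ hn]; linarith
      have hσu : σ u = x i := hσ i hiN u hul hur
      by_cases hc : u + h < ((i : ℝ) + 1) / 2 ^ N
      · have hσuh : σ (u + h) = x i := hσ i hiN (u + h) (by linarith) hc
        rw [hF]
        simp [hσu, hσuh, Real.zero_rpow hp0]
      · push_neg at hc
        have hi1 : i + 1 < 2 ^ N := by
          rcases lt_or_eq_of_le (Nat.succ_le_of_lt hiN) with h' | h'
          · exact h'
          · exfalso
            have : ((i : ℝ) + 1) / 2 ^ N = 1 := by
              rw [div_eq_one_iff_eq (ne_of_gt hn)]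
              exact_mod_cast congrArg (fun m : ℕ => (m : ℝ)) h'
            rw [this] at hc
            linarith
        have h1h : h < 1 / 2 ^ N := h1
        have hh2 : h * 2 ^ N < 1 := (lt_div_iff₀ hn).mp h1h
        have hur' : u * 2 ^ N < (i:ℝ) + 1 := (lt_div_iff₀ hn).mp hur
        have hσuh : σ (u + h) = x (i + 1) := by
          have hr : u + h < ((i:ℝ) + 1 + 1) / 2 ^ N := by
            rw [lt_div_iff₀ hn]; nlinarith
          have := hσ (i + 1) hi1 (u + h) (by push_cast; exact hc) (by push_cast; exact hr)
          exact this
        have hmem : u ∈ Set.Ico (((i:ℝ) + 1) / 2 ^ N - h) (((i:ℝ) + 1) / 2 ^ N) :=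
          ⟨by linarith, hur⟩
        calc F u = ENNReal.ofReal (dist (x i) (x (i + 1)) ^ p) := by
              rw [hF]; simp only [hσu, hσuh, dist_comm]
          _ ≤ g u := by
              rw [hg]
              have := Finset.single_le_sum
                (f := fun (j : ℕ) => (Set.Ico (((j:ℝ) + 1) / 2 ^ N - h) (((j:ℝ) + 1) / 2 ^ N)).indicator
                  (fun _ => ENNReal.ofReal (dist (x j) (x (j + 1)) ^ p)) u)
                (fun j _ => zero_le') (Finset.mem_range.2 hiN)
              simpa [Set.indicator_of_mem hmem] using this
    · rw [Set.indicator_of_notMem hu]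
      exact zero_le'
  refine step1.trans ?_
  have hcalc : ∫⁻ u, g u = ∑ i ∈ Finset.range (2 ^ N),
      ENNReal.ofReal (dist (x i) (x (i + 1)) ^ p) * ENNReal.ofReal h := by
    rw [hg, lintegral_finset_sum]
    · refine Finset.sum_congr rfl fun i _ => ?_
      rw [lintegral_indicator_const measurableSet_Ico, Real.volume_Ico]
      congr 1
      ring_nf
    · intro i _
      exact Measurable.indicator measurable_const measurableSet_Ico
  rw [hcalc]
  have : ∀ i ∈ Finset.range (2 ^ N),
      ENNReal.ofReal (dist (x i) (x (i + 1)) ^ p) * ENNReal.ofReal h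
        = ENNReal.ofReal (h * dist (x i) (x (i + 1)) ^ p) := by
    intro i _
    rw [← ENNReal.ofReal_mul (by positivity), mul_comm]
  rw [Finset.sum_congr rfl this, ← ENNReal.ofReal_sum_of_nonneg
    (fun i _ => by positivity), Finset.mul_sum]
end

section
/- Let (X,d) be a metric space, p ∈ [1,∞), N ∈ ℕ with N ≥ 1, and let σ : [0,1] → X be the piecewise-constant function built from points x_0,…,x_{2^N} ∈ X. Then for every integer k with 1 ≤ k ≤ 2^N − 1 and every h ∈ [k/2^N, (k+1)/2^N) with h < 1, it holds ∫_0^{1−h} d(σ(u+h),σ(u))^p du ≤ ((k+1)^p / 2^N) · Σ_{j=0}^{2^N−1} d(x_{j+1}, x_j)^p. -/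
open MeasureTheory Set Filter
open scoped ENNReal

open Finset in
lemma sum_rpow_le_card_rpow_mul (n : ℕ) (hn : 0 < n) (a : ℕ → ℝ) (ha : ∀ t, 0 ≤ a t)
    (p : ℝ) (hp : 1 ≤ p) :
    (∑ t ∈ range n, a t) ^ p ≤ (n : ℝ) ^ (p - 1) * ∑ t ∈ range n, a t ^ p := by
  have hn' : (0:ℝ) < n := by exact_mod_cast hn
  have key := Real.rpow_arith_mean_le_arith_mean_rpow (range n) (fun _ => 1 / (n:ℝ)) a
    (fun i _ => by positivity) (by simp [Finset.sum_const, mul_comm]; field_simp)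
    (fun i _ => ha i) hp
  rw [← Finset.mul_sum, ← Finset.mul_sum,
    Real.mul_rpow (by positivity) (Finset.sum_nonneg fun i _ => ha i), one_div,
    Real.inv_rpow hn'.le, inv_mul_le_iff₀ (Real.rpow_pos_of_pos hn' p)] at key
  calc (∑ t ∈ range n, a t) ^ p ≤ (n:ℝ) ^ p * ((n:ℝ)⁻¹ * ∑ t ∈ range n, a t ^ p) := key
    _ = (n : ℝ) ^ (p - 1) * ∑ t ∈ range n, a t ^ p := by
        rw [← mul_assoc, Real.rpow_sub hn', Real.rpow_one, div_eq_mul_inv]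


/-- large-shift estimate for the piecewise-constant interpolation `σ`
built from points `x 0, …, x (2^N)` on the dyadic grid of mesh `2^{-N}`. -/
theorem piecewise_constant_large_shift {X : Type*} [MetricSpace X]
    (p : ℝ) (hp : 1 ≤ p) (N : ℕ) (hN : 1 ≤ N) (x : ℕ → X) (σ : ℝ → X)
    (hσ : ∀ i : ℕ, i < 2 ^ N → ∀ u : ℝ,
      (i : ℝ) / 2 ^ N ≤ u → u < ((i : ℝ) + 1) / 2 ^ N → σ u = x i)
    (hσ1 : σ 1 = x (2 ^ N)) :
    ∀ k : ℕ, 1 ≤ k → k ≤ 2 ^ N - 1 →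
      ∀ h : ℝ, (k : ℝ) / 2 ^ N ≤ h → h < ((k : ℝ) + 1) / 2 ^ N → h < 1 →
        ∫⁻ u in Icc (0:ℝ) (1 - h), ENNReal.ofReal (dist (σ (u + h)) (σ u) ^ p)
          ≤ ENNReal.ofReal
              ((((k : ℝ) + 1) ^ p / 2 ^ N) *
                ∑ j ∈ Finset.range (2 ^ N), dist (x (j + 1)) (x j) ^ p) := by
  intro k hk1 hk2 h hh1 hh2 hh3
  have hD : (0:ℝ) < 2 ^ N := by positivity
  have h2N : 1 ≤ 2 ^ N := Nat.one_le_two_pow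
  have hkN : k + 1 ≤ 2 ^ N := by omega
  set M : ℕ := 2 ^ N - k with hMdef
  have hMk : M + k = 2 ^ N := by omega
  have hMcast : (M:ℝ) + (k:ℝ) = 2 ^ N := by exact_mod_cast congrArg (Nat.cast : ℕ → ℝ) hMk
  set a : ℕ → ℝ := fun j => dist (x (j+1)) (x j) ^ p with ha_def
  have ha : ∀ j, 0 ≤ a j := fun j => Real.rpow_nonneg dist_nonneg p
  set c : ℕ → ℝ := fun i => ((k:ℝ)+1) ^ (p-1) * ∑ t ∈ Finset.range (k+1), a (i+t) with hc
  have hcnn : ∀ i, 0 ≤ c i := fun i =>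
    mul_nonneg (Real.rpow_nonneg (by positivity) _) (Finset.sum_nonneg fun t _ => ha _)
  set T : ℕ → Set ℝ := fun i => Ico ((i:ℝ)/2^N) (((i:ℝ)+1)/2^N) ∩ Ico (0:ℝ) (1-h) with hT
  -- pointwise bound
  have key : ∀ i < M, ∀ u ∈ T i, dist (σ (u+h)) (σ u) ^ p ≤ c i := by
    intro i hi u hu
    obtain ⟨⟨hu1, hu2⟩, hu3, hu4⟩ := hu
    have hiN : i < 2 ^ N := lt_of_lt_of_le hi (Nat.sub_le _ _)
    have hσu : σ u = x i := hσ i hiN u hu1 hu2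
    have huh1 : u + h < 1 := by linarith
    have hlow : ((i:ℝ) + k) / 2 ^ N ≤ u + h := by
      rw [add_div]; exact add_le_add hu1 hh1
    have hstep : ∃ n, n ≤ k + 1 ∧ σ (u + h) = x (i + n) := by
      by_cases hcase : u + h < ((i:ℝ) + k + 1) / 2 ^ N
      · refine ⟨k, Nat.le_succ k, ?_⟩
        have hikN : i + k < 2 ^ N := by omega
        apply hσ (i+k) hikN
        · push_cast; exact hlow
        · push_cast; exact hcase
      · refine ⟨k+1, le_rfl, ?_⟩
        have hge : ((i:ℝ) + k + 1) / 2 ^ N ≤ u + h := le_of_not_gt hcase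
        have hikN : i + k + 1 < 2 ^ N := by
          by_contra hcon
          have h1 : (2:ℝ) ^ N ≤ ((i:ℝ) + k + 1) := by
            push_cast [not_lt] at hcon ⊢
            exact_mod_cast hcon
          have : (1:ℝ) ≤ ((i:ℝ) + k + 1) / 2 ^ N := (one_le_div hD).2 h1
          linarith
        apply hσ (i+k+1) hikN
        · push_cast; exact hge
        · have h5 := add_lt_add hu2 hh2
          rw [← add_div] at h5
          have h6 : ((i:ℝ) + 1 + ((k:ℝ) + 1)) / 2 ^ N = ((i:ℝ) + (k:ℝ) + 1 + 1) / 2 ^ N := by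
            ring
          push_cast
          linarith
    obtain ⟨n, hn, hσuh⟩ := hstep
    have chain : dist (σ (u+h)) (σ u)
        ≤ ∑ t ∈ Finset.range (k+1), dist (x (i+t+1)) (x (i+t)) := by
      rw [hσuh, hσu, dist_comm]
      calc dist (x i) (x (i+n))
          ≤ ∑ t ∈ Finset.range n, dist (x (i+t)) (x (i+(t+1))) :=
            dist_le_range_sum_dist (fun t => x (i+t)) n
        _ = ∑ t ∈ Finset.range n, dist (x (i+t+1)) (x (i+t)) := by
            refine Finset.sum_congr rfl fun t _ => ?_
            rw [dist_comm, ← Nat.add_assoc]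
        _ ≤ ∑ t ∈ Finset.range (k+1), dist (x (i+t+1)) (x (i+t)) :=
            Finset.sum_le_sum_of_subset_of_nonneg (Finset.range_subset_range.2 hn)
              (fun _ _ _ => dist_nonneg)
    have h1 := Real.rpow_le_rpow dist_nonneg chain (le_trans zero_le_one hp)
    refine h1.trans ?_
    have h2 := sum_rpow_le_card_rpow_mul (k+1) (Nat.succ_pos k)
      (fun t => dist (x (i+t+1)) (x (i+t))) (fun _ => dist_nonneg) p hp
    rw [hc]
    push_cast at h2 ⊢
    exact h2
  -- measure-theoretic part
  have hcover : Ico (0:ℝ) (1-h) ⊆ ⋃ i : ℕ, T i := by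
    intro u hu
    refine Set.mem_iUnion.2 ⟨⌊u * 2^N⌋₊, ⟨⟨?_, ?_⟩, hu⟩⟩
    · rw [div_le_iff₀ hD]; exact Nat.floor_le (by nlinarith [hu.1])
    · rw [lt_div_iff₀ hD]
      exact Nat.lt_floor_add_one _
  have hempty : ∀ i, M ≤ i → T i = ∅ := by
    intro i hi
    ext u
    simp only [hT, Set.mem_inter_iff, Set.mem_Ico, Set.mem_empty_iff_false, iff_false, not_and]
    intro h1 _ h4
    have hMi : (M:ℝ) ≤ (i:ℝ) := by exact_mod_cast hi
    have : (1:ℝ) - h ≤ (M:ℝ) / 2 ^ N := by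
      rw [le_div_iff₀ hD]
      nlinarith [hh1, (div_le_iff₀ hD).1 hh1]
    have : (M:ℝ)/2^N ≤ (i:ℝ)/2^N := by gcongr
    linarith [h1.1]
  have hvol : ∀ i : ℕ, volume (T i) ≤ ENNReal.ofReal (1 / 2^N) := by
    intro i
    calc volume (T i) ≤ volume (Ico ((i:ℝ)/2^N) (((i:ℝ)+1)/2^N)) :=
          measure_mono Set.inter_subset_left
      _ = ENNReal.ofReal (((i:ℝ)+1)/2^N - (i:ℝ)/2^N) := Real.volume_Ico
      _ = ENNReal.ofReal (1 / 2^N) := by rw [div_sub_div_same]; ring_nf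
  calc ∫⁻ u in Icc (0:ℝ) (1 - h), ENNReal.ofReal (dist (σ (u + h)) (σ u) ^ p)
      = ∫⁻ u in Ico (0:ℝ) (1 - h), ENNReal.ofReal (dist (σ (u + h)) (σ u) ^ p) :=
        (setLIntegral_congr Ico_ae_eq_Icc).symm
    _ ≤ ∫⁻ u in ⋃ i : ℕ, T i, ENNReal.ofReal (dist (σ (u + h)) (σ u) ^ p) :=
        lintegral_mono_set hcover
    _ ≤ ∑' i : ℕ, ∫⁻ u in T i, ENNReal.ofReal (dist (σ (u + h)) (σ u) ^ p) :=
        lintegral_iUnion_le _ _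
    _ = ∑ i ∈ Finset.range M, ∫⁻ u in T i, ENNReal.ofReal (dist (σ (u + h)) (σ u) ^ p) := by
        refine tsum_eq_sum fun i hi => ?_
        rw [hempty i (by simpa using hi)]
        simp
    _ ≤ ∑ i ∈ Finset.range M, ENNReal.ofReal (c i) * ENNReal.ofReal (1/2^N) := by
        refine Finset.sum_le_sum fun i hi => ?_
        have hiM : i < M := Finset.mem_range.1 hi
        calc ∫⁻ u in T i, ENNReal.ofReal (dist (σ (u + h)) (σ u) ^ p)
            ≤ ∫⁻ _ in T i, ENNReal.ofReal (c i) :=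
              setLIntegral_mono' (measurableSet_Ico.inter measurableSet_Ico)
                (fun u hu => ENNReal.ofReal_le_ofReal (key i hiM u hu))
          _ = ENNReal.ofReal (c i) * volume (T i) := setLIntegral_const _ _
          _ ≤ ENNReal.ofReal (c i) * ENNReal.ofReal (1/2^N) :=
              mul_le_mul_right (hvol i) _
    _ = ENNReal.ofReal (∑ i ∈ Finset.range M, c i * (1/2^N)) := by
        rw [ENNReal.ofReal_sum_of_nonneg fun i _ =>
          mul_nonneg (hcnn i) (by positivity)]
        refine Finset.sum_congr rfl fun i _ => ?_
        rw [ENNReal.ofReal_mul (hcnn i)]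
    _ ≤ ENNReal.ofReal ((((k : ℝ) + 1) ^ p / 2 ^ N) *
          ∑ j ∈ Finset.range (2 ^ N), a j) := by
        refine ENNReal.ofReal_le_ofReal ?_
        have swap : ∑ i ∈ Finset.range M, ∑ t ∈ Finset.range (k+1), a (i+t)
            ≤ ((k:ℝ)+1) * ∑ j ∈ Finset.range (2^N), a j := by
          rw [Finset.sum_comm]
          have inner : ∀ t ∈ Finset.range (k+1),
              ∑ i ∈ Finset.range M, a (i+t) ≤ ∑ j ∈ Finset.range (2^N), a j := by
            intro t ht
            have ht' : t ≤ k := Nat.lt_succ_iff.1 (Finset.mem_range.1 ht)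
            have heq : ∑ i ∈ Finset.range M, a (i+t) = ∑ j ∈ Finset.Ico t (t+M), a j := by
              rw [Finset.sum_Ico_eq_sum_range]
              simp only [Nat.add_sub_cancel_left]
              exact Finset.sum_congr rfl fun i _ => by rw [Nat.add_comm]
            rw [heq]
            refine Finset.sum_le_sum_of_subset_of_nonneg ?_ (fun j _ _ => ha j)
            intro j hj
            simp only [Finset.mem_Ico, Finset.mem_range] at hj ⊢
            omega
          calc ∑ t ∈ Finset.range (k+1), ∑ i ∈ Finset.range M, a (i+t)
              ≤ ∑ _t ∈ Finset.range (k+1), ∑ j ∈ Finset.range (2^N), a j :=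
                Finset.sum_le_sum inner
            _ = ((k:ℝ)+1) * ∑ j ∈ Finset.range (2^N), a j := by
                rw [Finset.sum_const, nsmul_eq_mul, Finset.card_range]
                push_cast
                ring
        have hrw : ∑ i ∈ Finset.range M, c i * (1/2^N)
            = (((k:ℝ)+1)^(p-1) / 2^N) * ∑ i ∈ Finset.range M, ∑ t ∈ Finset.range (k+1), a (i+t) := by
          rw [Finset.mul_sum]
          refine Finset.sum_congr rfl fun i _ => ?_
          rw [hc]
          ring
        rw [hrw]
        have hpow : ((k:ℝ)+1)^(p-1) * ((k:ℝ)+1) = ((k:ℝ)+1)^p := by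
          have hk0 : (0:ℝ) < (k:ℝ)+1 := by positivity
          rw [Real.rpow_sub hk0, Real.rpow_one, div_mul_cancel₀]
          exact ne_of_gt hk0
        calc (((k:ℝ)+1)^(p-1) / 2^N) * ∑ i ∈ Finset.range M, ∑ t ∈ Finset.range (k+1), a (i+t)
            ≤ (((k:ℝ)+1)^(p-1) / 2^N) * (((k:ℝ)+1) * ∑ j ∈ Finset.range (2^N), a j) := by
              refine mul_le_mul_of_nonneg_left swap ?_
              positivity
          _ = (((k : ℝ) + 1) ^ p / 2 ^ N) * ∑ j ∈ Finset.range (2 ^ N), a j := by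
              rw [← hpow]; ring
end

section
/- Let (X,d) be a metric space, p ∈ (1,∞), N ∈ ℕ with N ≥ 1, and let σ : [0,1] → X be the piecewise-constant function built from points x_0,…,x_{2^N} ∈ X. Then sup_{h ∈ (0,1)} (1/h) ∫_0^{1−h} d(σ(u+h),σ(u))^p du ≤ ( 2^p + 2^{Np}/(2^N − 1) ) · Σ_{j=0}^{2^N−1} d(x_{j+1}, x_j)^p. -/
open MeasureTheory Set Filter
open scoped ENNReal

lemma sum_rpow_le_aux (n : ℕ) (hn : 0 < n) {p : ℝ} (hp : 1 ≤ p)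
    (a : ℕ → ℝ) (ha : ∀ k, 0 ≤ a k) :
    (∑ k ∈ Finset.range n, a k) ^ p ≤ (n : ℝ) ^ (p - 1) * ∑ k ∈ Finset.range n, a k ^ p := by
  have hn' : (0:ℝ) < n := by exact_mod_cast hn
  have key := Real.rpow_arith_mean_le_arith_mean_rpow (Finset.range n)
    (fun _ => 1 / (n:ℝ)) a (fun i _ => by positivity)
    (by simp [Finset.sum_const]; field_simp) (fun i _ => ha i) hp
  have h1 : (∑ i ∈ Finset.range n, (1 / (n:ℝ)) * a i) = (1/(n:ℝ)) * ∑ k ∈ Finset.range n, a k := by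
    rw [Finset.mul_sum]
  have h2 : (∑ i ∈ Finset.range n, (1 / (n:ℝ)) * a i ^ p) = (1/(n:ℝ)) * ∑ k ∈ Finset.range n, a k ^ p := by
    rw [Finset.mul_sum]
  rw [h1, h2] at key
  have hs : 0 ≤ ∑ k ∈ Finset.range n, a k := Finset.sum_nonneg fun k _ => ha k
  have hmul : ((1/(n:ℝ)) * ∑ k ∈ Finset.range n, a k) ^ p
      = (1/(n:ℝ))^p * (∑ k ∈ Finset.range n, a k) ^ p :=
    Real.mul_rpow (by positivity) hs
  rw [hmul] at key
  have hnp : (0:ℝ) < ((n:ℝ))^p := Real.rpow_pos_of_pos hn' p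
  have step : (∑ k ∈ Finset.range n, a k) ^ p ≤ (n:ℝ)^p * ((1/(n:ℝ)) * ∑ k ∈ Finset.range n, a k ^ p) := by
    have hmk := mul_le_mul_of_nonneg_left key (le_of_lt hnp)
    calc (∑ k ∈ Finset.range n, a k) ^ p
        = (n:ℝ)^p * ((1/(n:ℝ))^p * (∑ k ∈ Finset.range n, a k) ^ p) := by
          rw [← mul_assoc, ← Real.mul_rpow (by positivity) (by positivity)]
          field_simp
          rw [Real.one_rpow, mul_one]
      _ ≤ _ := hmk
  calc (∑ k ∈ Finset.range n, a k) ^ p ≤ (n:ℝ)^p * ((1/(n:ℝ)) * ∑ k ∈ Finset.range n, a k ^ p) := step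
    _ = ((n:ℝ)^p / (n:ℝ)) * ∑ k ∈ Finset.range n, a k ^ p := by ring
    _ = (n:ℝ)^(p-1) * ∑ k ∈ Finset.range n, a k ^ p := by
        rw [Real.rpow_sub hn', Real.rpow_one]

/-- uniform shift bound (6.9) for the piecewise-constant interpolation `σ`
built from points `x 0, …, x (2^N)` on the dyadic grid of mesh `2^{-N}`. -/
theorem piecewise_constant_uniform_shift_bound {X : Type*} [MetricSpace X]
    (p : ℝ) (hp : 1 < p) (N : ℕ) (hN : 1 ≤ N) (x : ℕ → X) (σ : ℝ → X)
    (hσ : ∀ i : ℕ, i < 2 ^ N → ∀ u : ℝ,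
      (i : ℝ) / 2 ^ N ≤ u → u < ((i : ℝ) + 1) / 2 ^ N → σ u = x i)
    (hσ1 : σ 1 = x (2 ^ N)) :
    (⨆ (h : ℝ) (_ : 0 < h) (_ : h < 1),
      ENNReal.ofReal (1 / h) *
        ∫⁻ u in Icc (0:ℝ) (1 - h), ENNReal.ofReal (dist (σ (u + h)) (σ u) ^ p))
      ≤ ENNReal.ofReal
          (((2 : ℝ) ^ p + (2 : ℝ) ^ ((N : ℝ) * p) / ((2 : ℝ) ^ N - 1)) *
            ∑ j ∈ Finset.range (2 ^ N), dist (x (j + 1)) (x j) ^ p) := by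
  have hp0 : (0:ℝ) < p := lt_trans one_pos hp
  set n : ℕ := 2 ^ N with hn
  have hn2 : 2 ≤ n := by
    calc 2 = 2 ^ 1 := rfl
    _ ≤ 2 ^ N := Nat.pow_le_pow_right (by norm_num) hN
  have hn0 : 0 < n := by omega
  have hnR : (0:ℝ) < (n:ℝ) := by exact_mod_cast hn0
  have hnR2 : (2:ℝ) ^ N = (n:ℝ) := by rw [hn]; push_cast; ring
  -- formula for σ
  have hσ' : ∀ v : ℝ, 0 ≤ v → v ≤ 1 → σ v = x ⌊v * n⌋₊ := by
    intro v hv0 hv1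
    rcases eq_or_lt_of_le hv1 with hv | hv
    · rw [hv, hσ1]
      congr 1
      rw [one_mul, Nat.floor_natCast]
    · have hvn : 0 ≤ v * n := by positivity
      have hfl : (⌊v * n⌋₊ : ℝ) ≤ v * n := Nat.floor_le hvn
      have hfl2 : v * n < ⌊v * n⌋₊ + 1 := Nat.lt_floor_add_one _
      have hi : ⌊v * n⌋₊ < n := by
        rw [Nat.floor_lt hvn]
        nlinarith
      refine hσ _ (by rw [hn] at hi; exact hi) v ?_ ?_
      · rw [div_le_iff₀ (by rw [hnR2]; exact hnR), hnR2]; linarith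
      · rw [lt_div_iff₀ (by rw [hnR2]; exact hnR), hnR2]; linarith
  set S := ∑ j ∈ Finset.range n, dist (x (j + 1)) (x j) ^ p with hS
  have hS0 : 0 ≤ S := Finset.sum_nonneg fun k _ => Real.rpow_nonneg dist_nonneg p
  set C : ℝ := (n:ℝ) ^ (p - 1) with hC
  have hC0 : 0 ≤ C := Real.rpow_nonneg (le_of_lt hnR) _
  refine iSup_le fun h => iSup_le fun hh0 => iSup_le fun hh1 => ?_
  have h1h : 0 ≤ 1 - h := by linarith
  -- the ENNReal-valued dominating function
  set g : ℝ → ℝ≥0∞ := fun u => ENNReal.ofReal C * ∑ k ∈ Finset.range n,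
      ENNReal.ofReal (dist (x (k+1)) (x k) ^ p) *
        (Ico (((k:ℝ)+1)/(n:ℝ) - h) (((k:ℝ)+1)/(n:ℝ))).indicator 1 u with hg
  have hmeas_sum : Measurable fun u : ℝ => ∑ k ∈ Finset.range n,
      ENNReal.ofReal (dist (x (k+1)) (x k) ^ p) *
        (Ico (((k:ℝ)+1)/(n:ℝ) - h) (((k:ℝ)+1)/(n:ℝ))).indicator 1 u := by
    apply Finset.measurable_sum
    intro k _
    exact (measurable_const.indicator measurableSet_Ico).const_mul _
  have hgmeas : Measurable g := hmeas_sum.const_mul _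
  -- pointwise bound
  have ptwise : ∀ u ∈ Icc (0:ℝ) (1 - h),
      ENNReal.ofReal (dist (σ (u + h)) (σ u) ^ p) ≤ g u := by
    intro u hu
    obtain ⟨hu0, hu1⟩ := hu
    set i := ⌊u * n⌋₊ with hi
    set j := ⌊(u + h) * n⌋₊ with hj
    have hij : i ≤ j := Nat.floor_mono (by nlinarith)
    have hjn : j ≤ n := by
      have h1 : (u + h) * n ≤ (n:ℝ) := by nlinarith
      calc j ≤ ⌊(n:ℝ)⌋₊ := Nat.floor_mono h1
        _ = n := Nat.floor_natCast n
    have hσu : σ u = x i := hσ' u hu0 (by linarith)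
    have hσuh : σ (u + h) = x j := hσ' (u + h) (by linarith) (by linarith)
    rw [hσu, hσuh]
    set a : ℕ → ℝ := fun k => if i ≤ k ∧ k < j then dist (x (k+1)) (x k) else 0 with ha
    have ha0 : ∀ k, 0 ≤ a k := by
      intro k; rw [ha]; dsimp only; split
      · exact dist_nonneg
      · exact le_rfl
    have hdist : dist (x j) (x i) ≤ ∑ k ∈ Finset.range n, a k := by
      have h1 : dist (x i) (x j) ≤ ∑ k ∈ Finset.Ico i j, dist (x k) (x (k+1)) :=
        dist_le_Ico_sum_dist x hij
      have h2 : ∑ k ∈ Finset.range n, a k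
          = ∑ k ∈ Finset.Ico i j, dist (x k) (x (k+1)) := by
        rw [ha]
        rw [Finset.sum_ite, Finset.sum_const_zero, add_zero]
        apply Finset.sum_congr
        · ext k
          simp only [Finset.mem_filter, Finset.mem_range, Finset.mem_Ico]
          omega
        · intro k _; exact dist_comm (x (k+1)) (x k)
      rw [h2, dist_comm]
      exact h1
    have hterm : ∀ k ∈ Finset.range n, ENNReal.ofReal (a k ^ p) ≤
        ENNReal.ofReal (dist (x (k+1)) (x k) ^ p) *
          (Ico (((k:ℝ)+1)/(n:ℝ) - h) (((k:ℝ)+1)/(n:ℝ))).indicator 1 u := by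
      intro k _
      by_cases hk : i ≤ k ∧ k < j
      · have hmem : u ∈ Ico (((k:ℝ)+1)/(n:ℝ) - h) (((k:ℝ)+1)/(n:ℝ)) := by
          constructor
          · have hjle : (j:ℝ) ≤ (u+h)*n := Nat.floor_le (by nlinarith)
            have hkj : (k:ℝ)+1 ≤ (j:ℝ) := by exact_mod_cast hk.2
            have : ((k:ℝ)+1)/(n:ℝ) ≤ u + h := by
              rw [div_le_iff₀ hnR]; linarith
            linarith
          · have hlt : u * n < (i:ℝ) + 1 := Nat.lt_floor_add_one _
            have hik : (i:ℝ) ≤ (k:ℝ) := by exact_mod_cast hk.1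
            rw [lt_div_iff₀ hnR]; linarith
        rw [indicator_of_mem hmem]
        have : a k = dist (x (k+1)) (x k) := by rw [ha]; simp [hk]
        rw [this]
        simp
      · have : a k = 0 := by rw [ha]; simp [hk]
        rw [this, Real.zero_rpow (ne_of_gt hp0)]
        simp
    calc ENNReal.ofReal (dist (x j) (x i) ^ p)
        ≤ ENNReal.ofReal (C * ∑ k ∈ Finset.range n, a k ^ p) := by
          apply ENNReal.ofReal_le_ofReal
          calc dist (x j) (x i) ^ p ≤ (∑ k ∈ Finset.range n, a k) ^ p :=
                Real.rpow_le_rpow dist_nonneg hdist (le_of_lt hp0)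
            _ ≤ C * ∑ k ∈ Finset.range n, a k ^ p :=
                sum_rpow_le_aux n hn0 (le_of_lt hp) a ha0
      _ = ENNReal.ofReal C * ENNReal.ofReal (∑ k ∈ Finset.range n, a k ^ p) :=
          ENNReal.ofReal_mul hC0
      _ = ENNReal.ofReal C * ∑ k ∈ Finset.range n, ENNReal.ofReal (a k ^ p) := by
          rw [ENNReal.ofReal_sum_of_nonneg (fun k _ => Real.rpow_nonneg (ha0 k) p)]
      _ ≤ g u := by
          rw [hg]
          exact mul_le_mul_right (Finset.sum_le_sum hterm) _
  -- integrate the bound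
  have hint : ∫⁻ u, g u = ENNReal.ofReal C * (ENNReal.ofReal S * ENNReal.ofReal h) := by
    rw [hg]
    rw [lintegral_const_mul _ hmeas_sum]
    congr 1
    have hsum := lintegral_finset_sum (μ := (volume : Measure ℝ)) (Finset.range n)
      (f := fun k u => ENNReal.ofReal (dist (x (k+1)) (x k) ^ p) *
        (Ico (((k:ℝ)+1)/(n:ℝ) - h) (((k:ℝ)+1)/(n:ℝ))).indicator 1 u)
      (fun k _ => (measurable_const.indicator measurableSet_Ico).const_mul _)
    rw [hsum]
    have hterm : ∀ k ∈ Finset.range n,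
        (∫⁻ u, ENNReal.ofReal (dist (x (k+1)) (x k) ^ p) *
          (Ico (((k:ℝ)+1)/(n:ℝ) - h) (((k:ℝ)+1)/(n:ℝ))).indicator 1 u)
        = ENNReal.ofReal (dist (x (k+1)) (x k) ^ p) * ENNReal.ofReal h := by
      intro k _
      have hcm := lintegral_const_mul (μ := (volume : Measure ℝ))
        (r := ENNReal.ofReal (dist (x (k+1)) (x k) ^ p))
        (f := fun u => (Ico (((k:ℝ)+1)/(n:ℝ) - h) (((k:ℝ)+1)/(n:ℝ))).indicator 1 u)
        (measurable_const.indicator measurableSet_Ico)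
      rw [hcm]
      congr 1
      rw [lintegral_indicator_one measurableSet_Ico, Real.volume_Ico, sub_sub_cancel]
    rw [Finset.sum_congr rfl hterm, ← Finset.sum_mul,
      ← ENNReal.ofReal_sum_of_nonneg (fun k _ => Real.rpow_nonneg dist_nonneg p)]
  have hfinal : ENNReal.ofReal (1 / h) *
      ∫⁻ u in Icc (0:ℝ) (1 - h), ENNReal.ofReal (dist (σ (u + h)) (σ u) ^ p)
      ≤ ENNReal.ofReal (C * S) := by
    calc ENNReal.ofReal (1 / h) *
        ∫⁻ u in Icc (0:ℝ) (1 - h), ENNReal.ofReal (dist (σ (u + h)) (σ u) ^ p)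
        ≤ ENNReal.ofReal (1 / h) * ∫⁻ u in Icc (0:ℝ) (1 - h), g u :=
          mul_le_mul_right (setLIntegral_mono hgmeas ptwise) _
      _ ≤ ENNReal.ofReal (1 / h) * ∫⁻ u, g u :=
          mul_le_mul_right (setLIntegral_le_lintegral _ _) _
      _ = ENNReal.ofReal (1 / h) * (ENNReal.ofReal C * (ENNReal.ofReal S * ENNReal.ofReal h)) := by
          rw [hint]
      _ = ENNReal.ofReal ((1 / h) * (C * (S * h))) := by
          rw [ENNReal.ofReal_mul (by positivity), ENNReal.ofReal_mul hC0,
            ENNReal.ofReal_mul hS0]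
      _ = ENNReal.ofReal (C * S) := by
          congr 1
          field_simp
  refine hfinal.trans (ENNReal.ofReal_le_ofReal ?_)
  -- numeric comparison of constants
  have h2N : (2:ℝ) ≤ (2:ℝ) ^ N := by
    calc (2:ℝ) = 2 ^ 1 := by norm_num
    _ ≤ 2 ^ N := pow_le_pow_right₀ (by norm_num) hN
  have hd : (0:ℝ) < (2:ℝ) ^ N - 1 := by linarith
  have hCval : C = (2:ℝ) ^ ((N:ℝ) * (p - 1)) := by
    rw [hC, ← hnR2, ← Real.rpow_natCast (2:ℝ) N, ← Real.rpow_mul (by norm_num)]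
  have hkey : C ≤ (2:ℝ) ^ ((N:ℝ) * p) / ((2:ℝ) ^ N - 1) := by
    rw [hCval, le_div_iff₀ hd]
    calc (2:ℝ) ^ ((N:ℝ) * (p - 1)) * ((2:ℝ) ^ N - 1)
        ≤ (2:ℝ) ^ ((N:ℝ) * (p - 1)) * (2:ℝ) ^ N := by
          apply mul_le_mul_of_nonneg_left (by linarith) (Real.rpow_nonneg (by norm_num) _)
      _ = (2:ℝ) ^ ((N:ℝ) * p) := by
          rw [← Real.rpow_natCast (2:ℝ) N, ← Real.rpow_add (by norm_num : (0:ℝ) < 2)]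
          ring_nf
  have h2p : (0:ℝ) ≤ (2:ℝ) ^ p := Real.rpow_nonneg (by norm_num) p
  apply mul_le_mul_of_nonneg_right _ hS0
  linarith
end

section
/- Let (X,d) be a metric space, p ∈ [1,∞), N ∈ ℕ with N ≥ 1, and let σ : [0,1] → X be the piecewise-constant function built from points x_0,…,x_{2^N} ∈ X. Then sup_{h ∈ [1/2^N, 1)} (1/h^p) ∫_0^{1−h} d(σ(u+h),σ(u))^p du ≤ 2^p · 2^{N(p−1)} · Σ_{j=0}^{2^N−1} d(x_{j+1}, x_j)^p. -/
open MeasureTheory Set Filter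
open scoped ENNReal

private lemma chain_dist' {X : Type*} [MetricSpace X] (x : ℕ → X) (m : ℕ) :
    ∀ n : ℕ, m ≤ n → dist (x n) (x m) ≤ ∑ j ∈ Finset.Ico m n, dist (x (j + 1)) (x j) := by
  intro n
  induction n with
  | zero => intro hm; interval_cases m; simp
  | succ k ih =>
    intro hm
    rcases Nat.lt_or_ge m (k+1) with hlt | hge
    · have hmk : m ≤ k := Nat.lt_succ_iff.mp hlt
      calc dist (x (k+1)) (x m) ≤ dist (x (k+1)) (x k) + dist (x k) (x m) := dist_triangle _ _ _
        _ ≤ dist (x (k+1)) (x k) + ∑ j ∈ Finset.Ico m k, dist (x (j+1)) (x j) := by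
            linarith [ih hmk]
        _ = ∑ j ∈ Finset.Ico m (k+1), dist (x (j+1)) (x j) := by
            rw [Finset.sum_Ico_succ_top hmk]; ring
    · have : m = k + 1 := le_antisymm hm hge
      subst this; simp

/-- Sobolev-energy bound for the piecewise-constant interpolation `σ`
built from points `x 0, …, x (2^N)` on the dyadic grid of mesh `2^{-N}`. -/
theorem piecewise_constant_sobolev_energy_bound {X : Type*} [MetricSpace X]
    (p : ℝ) (hp : 1 ≤ p) (N : ℕ) (hN : 1 ≤ N) (x : ℕ → X) (σ : ℝ → X)
    (hσ : ∀ i : ℕ, i < 2 ^ N → ∀ u : ℝ,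
      (i : ℝ) / 2 ^ N ≤ u → u < ((i : ℝ) + 1) / 2 ^ N → σ u = x i)
    (hσ1 : σ 1 = x (2 ^ N)) :
    (⨆ (h : ℝ) (_ : 1 / 2 ^ N ≤ h) (_ : h < 1),
      ENNReal.ofReal (1 / h ^ p) *
        ∫⁻ u in Icc (0:ℝ) (1 - h), ENNReal.ofReal (dist (σ (u + h)) (σ u) ^ p))
      ≤ ENNReal.ofReal
          ((2 : ℝ) ^ p * (2 : ℝ) ^ ((N : ℝ) * (p - 1)) *
            ∑ j ∈ Finset.range (2 ^ N), dist (x (j + 1)) (x j) ^ p) := by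
  have h2 : (0:ℝ) < 2 ^ N := by positivity
  have hp0 : 0 ≤ p := le_trans zero_le_one hp
  set idx : ℝ → ℕ := fun u => ⌊u * 2 ^ N⌋₊ with hidx
  -- σ in terms of idx
  have hσidx : ∀ u : ℝ, 0 ≤ u → u ≤ 1 → σ u = x (idx u) := by
    intro u h0 h1
    rcases lt_or_eq_of_le h1 with h1 | rfl
    · refine hσ (idx u) ?_ u ?_ ?_
      · rw [hidx]; simp only
        rw [Nat.floor_lt (by positivity)]
        push_cast; nlinarith
      · rw [div_le_iff₀ h2]; exact Nat.floor_le (by positivity)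
      · rw [lt_div_iff₀ h2]; exact Nat.lt_floor_add_one _
    · have : idx 1 = 2 ^ N := by
        rw [hidx]; simp only [one_mul]
        rw [show ((2:ℝ) ^ N) = ((2 ^ N : ℕ) : ℝ) by push_cast; ring, Nat.floor_natCast]
      rw [this, hσ1]
  -- idx monotone
  have hidx_mono : ∀ ⦃u v : ℝ⦄, u ≤ v → idx u ≤ idx v := fun u v huv =>
    Nat.floor_mono (mul_le_mul_of_nonneg_right huv h2.le)
  -- nonneg of energy terms
  have hdnn : ∀ j, 0 ≤ dist (x (j + 1)) (x j) ^ p := fun j => Real.rpow_nonneg dist_nonneg p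
  have hSnn : 0 ≤ ∑ j ∈ Finset.range (2 ^ N), dist (x (j + 1)) (x j) ^ p :=
    Finset.sum_nonneg fun j _ => hdnn j
  refine iSup_le fun h => iSup_le fun hh1 => iSup_le fun hh2 => ?_
  have hh0 : 0 < h := lt_of_lt_of_le (by positivity) hh1
  have hhN : 1 ≤ h * 2 ^ N := by
    rw [div_le_iff₀ h2] at hh1; linarith
  -- the constant
  set C : ℝ := (2 * h * 2 ^ N) ^ (p - 1) with hC
  have hCnn : 0 ≤ C := Real.rpow_nonneg (by positivity) _
  -- pointwise bound
  have key : ∀ u : ℝ, u ∈ Icc (0:ℝ) (1 - h) →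
      ENNReal.ofReal (dist (σ (u + h)) (σ u) ^ p) ≤
        ENNReal.ofReal C * ∑ j ∈ Finset.range (2 ^ N),
          (Set.Ico (((j:ℝ) + 1) / 2 ^ N - h) (((j:ℝ) + 1) / 2 ^ N)).indicator
            (fun _ => ENNReal.ofReal (dist (x (j + 1)) (x j) ^ p)) u := by
    intro u hu
    obtain ⟨hu0, hu1⟩ := hu
    have huh1 : u + h ≤ 1 := by linarith
    have huh0 : 0 ≤ u + h := by linarith
    have hmono : idx u ≤ idx (u + h) := hidx_mono (by linarith)
    -- distance bound
    have step1 : dist (σ (u + h)) (σ u) ≤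
        ∑ j ∈ Finset.Ico (idx u) (idx (u + h)), dist (x (j + 1)) (x j) := by
      rw [hσidx u hu0 (by linarith), hσidx (u + h) huh0 huh1]
      exact chain_dist' x (idx u) (idx (u + h)) hmono
    have step2 : dist (σ (u + h)) (σ u) ^ p ≤
        ((Finset.Ico (idx u) (idx (u + h))).card : ℝ) ^ (p - 1) *
          ∑ j ∈ Finset.Ico (idx u) (idx (u + h)), dist (x (j + 1)) (x j) ^ p :=
      le_trans (Real.rpow_le_rpow dist_nonneg step1 hp0)
        (Real.rpow_sum_le_const_mul_sum_rpow_of_nonneg _ hp fun i _ => dist_nonneg)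
    -- card bound
    have hcard : ((Finset.Ico (idx u) (idx (u + h))).card : ℝ) ≤ 2 * h * 2 ^ N := by
      rw [Nat.card_Ico, Nat.cast_sub hmono]
      have f1 : (idx (u + h) : ℝ) ≤ (u + h) * 2 ^ N := Nat.floor_le (by positivity)
      have f2 : u * 2 ^ N < (idx u : ℝ) + 1 := Nat.lt_floor_add_one _
      nlinarith
    have step3 : dist (σ (u + h)) (σ u) ^ p ≤
        C * ∑ j ∈ Finset.Ico (idx u) (idx (u + h)), dist (x (j + 1)) (x j) ^ p := by
      refine le_trans step2 (mul_le_mul_of_nonneg_right ?_ (Finset.sum_nonneg fun j _ => hdnn j))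
      exact Real.rpow_le_rpow (Nat.cast_nonneg _) hcard (by linarith)
    -- window sum as sum over range with ite
    have hsub : Finset.Ico (idx u) (idx (u + h)) ⊆ Finset.range (2 ^ N) := by
      intro j hj
      rw [Finset.mem_range]
      have := (Finset.mem_Ico.mp hj).2
      have hle : idx (u + h) ≤ 2 ^ N := by
        have : idx (u + h) ≤ idx 1 := hidx_mono huh1
        have h1 : idx 1 = 2 ^ N := by
          rw [hidx]; simp only [one_mul]
          rw [show ((2:ℝ) ^ N) = ((2 ^ N : ℕ) : ℝ) by push_cast; ring, Nat.floor_natCast]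
        omega
      omega
    have step4 : ∑ j ∈ Finset.Ico (idx u) (idx (u + h)), dist (x (j + 1)) (x j) ^ p =
        ∑ j ∈ Finset.range (2 ^ N),
          (if j ∈ Finset.Ico (idx u) (idx (u + h)) then dist (x (j + 1)) (x j) ^ p else 0) := by
      rw [Finset.sum_ite_mem, Finset.inter_eq_right.mpr hsub]
    -- membership iff
    have hiff : ∀ j : ℕ, j ∈ Finset.Ico (idx u) (idx (u + h)) ↔
        u ∈ Set.Ico (((j:ℝ) + 1) / 2 ^ N - h) (((j:ℝ) + 1) / 2 ^ N) := by
      intro j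
      rw [Finset.mem_Ico, Set.mem_Ico]
      constructor
      · rintro ⟨ha, hb⟩
        constructor
        · have : ((j:ℝ) + 1) ≤ (u + h) * 2 ^ N := by
            have := (Nat.le_floor_iff (by positivity)).mp (Nat.succ_le_of_lt hb)
            push_cast at this ⊢; linarith
          rw [sub_le_iff_le_add, div_le_iff₀ h2]; linarith
        · have : ¬ ((j:ℝ) + 1 ≤ u * 2 ^ N) := by
            intro hcon
            have : j + 1 ≤ idx u := Nat.le_floor (by push_cast; linarith)
            omega
          rw [lt_div_iff₀ h2]; linarith
      · rintro ⟨ha, hb⟩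
        constructor
        · have : u * 2 ^ N < (j:ℝ) + 1 := by
            rw [lt_div_iff₀ h2] at hb; linarith
          have : idx u < j + 1 := by
            rw [hidx]; simp only
            rw [Nat.floor_lt (by positivity)]
            push_cast; linarith
          omega
        · have : ((j:ℝ) + 1) ≤ (u + h) * 2 ^ N := by
            rw [sub_le_iff_le_add, div_le_iff₀ h2] at ha; linarith
          have : j + 1 ≤ idx (u + h) := Nat.le_floor (by push_cast; linarith)
          omega
    calc ENNReal.ofReal (dist (σ (u + h)) (σ u) ^ p)
        ≤ ENNReal.ofReal (C * ∑ j ∈ Finset.range (2 ^ N),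
            (if j ∈ Finset.Ico (idx u) (idx (u + h)) then dist (x (j + 1)) (x j) ^ p else 0)) := by
          refine ENNReal.ofReal_le_ofReal ?_
          rw [← step4]; exact step3
      _ = ENNReal.ofReal C * ∑ j ∈ Finset.range (2 ^ N),
            (Set.Ico (((j:ℝ) + 1) / 2 ^ N - h) (((j:ℝ) + 1) / 2 ^ N)).indicator
              (fun _ => ENNReal.ofReal (dist (x (j + 1)) (x j) ^ p)) u := by
          rw [ENNReal.ofReal_mul hCnn, ENNReal.ofReal_sum_of_nonneg
            (fun j _ => by split_ifs with hc; exacts [hdnn j, le_rfl])]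
          congr 1
          refine Finset.sum_congr rfl fun j _ => ?_
          by_cases hc : j ∈ Finset.Ico (idx u) (idx (u + h))
          · rw [if_pos hc, Set.indicator_of_mem ((hiff j).mp hc)]
          · rw [if_neg hc, Set.indicator_of_notMem (fun hm => hc ((hiff j).mpr hm)),
              ENNReal.ofReal_zero]
  -- now the integral estimate
  have hint : (∫⁻ u in Icc (0:ℝ) (1 - h), ENNReal.ofReal (dist (σ (u + h)) (σ u) ^ p)) ≤
      ENNReal.ofReal C * ((∑ j ∈ Finset.range (2 ^ N),
        ENNReal.ofReal (dist (x (j + 1)) (x j) ^ p)) * ENNReal.ofReal h) := by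
    have step1 : (∫⁻ u in Icc (0:ℝ) (1 - h), ENNReal.ofReal (dist (σ (u + h)) (σ u) ^ p)) ≤
        ∫⁻ u in Icc (0:ℝ) (1 - h), ENNReal.ofReal C * ∑ j ∈ Finset.range (2 ^ N),
          (Set.Ico (((j:ℝ) + 1) / 2 ^ N - h) (((j:ℝ) + 1) / 2 ^ N)).indicator
            (fun _ => ENNReal.ofReal (dist (x (j + 1)) (x j) ^ p)) u :=
      lintegral_mono_ae ((ae_restrict_iff' measurableSet_Icc).mpr (ae_of_all _ key))
    refine le_trans step1 ?_
    refine le_trans (setLIntegral_le_lintegral _ _) ?_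
    rw [lintegral_const_mul' _ _ ENNReal.ofReal_ne_top]
    refine mul_le_mul_right ?_ _
    rw [lintegral_finset_sum _ (fun j _ =>
      (measurable_const.indicator measurableSet_Ico))]
    rw [Finset.sum_mul]
    refine Finset.sum_le_sum fun j _ => ?_
    rw [lintegral_indicator measurableSet_Ico, setLIntegral_const, Real.volume_Ico]
    rw [show ((j:ℝ) + 1) / 2 ^ N - (((j:ℝ) + 1) / 2 ^ N - h) = h by ring]
  -- assemble
  refine le_trans (mul_le_mul_right hint _) ?_
  -- rewrite RHS
  have hRHS : ENNReal.ofReal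
      ((2 : ℝ) ^ p * (2 : ℝ) ^ ((N : ℝ) * (p - 1)) *
        ∑ j ∈ Finset.range (2 ^ N), dist (x (j + 1)) (x j) ^ p) =
      ENNReal.ofReal ((2 : ℝ) ^ p * (2 : ℝ) ^ ((N : ℝ) * (p - 1))) *
        ∑ j ∈ Finset.range (2 ^ N), ENNReal.ofReal (dist (x (j + 1)) (x j) ^ p) := by
    rw [ENNReal.ofReal_mul (by positivity), ENNReal.ofReal_sum_of_nonneg (fun j _ => hdnn j)]
  rw [hRHS]
  -- rearrange LHS
  have hrearr : ENNReal.ofReal (1 / h ^ p) * (ENNReal.ofReal C *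
      ((∑ j ∈ Finset.range (2 ^ N), ENNReal.ofReal (dist (x (j + 1)) (x j) ^ p)) *
        ENNReal.ofReal h)) =
      ENNReal.ofReal (1 / h ^ p * C * h) *
        ∑ j ∈ Finset.range (2 ^ N), ENNReal.ofReal (dist (x (j + 1)) (x j) ^ p) := by
    rw [ENNReal.ofReal_mul (by positivity), ENNReal.ofReal_mul (by positivity)]
    ring
  rw [hrearr]
  refine mul_le_mul_left (ENNReal.ofReal_le_ofReal ?_) _
  -- real inequality: 1/h^p * (2h·2^N)^(p-1) * h ≤ 2^p * 2^(N(p-1))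
  have hCval : C = 2 ^ (p - 1) * h ^ (p - 1) * ((2:ℝ) ^ N) ^ (p - 1) := by
    rw [hC, Real.mul_rpow (by positivity) (by positivity),
      Real.mul_rpow (by positivity) (by positivity)]
  have hhp : h ^ (p - 1) * h = h ^ p := by
    rw [← Real.rpow_add_one hh0.ne' (p - 1), sub_add_cancel]
  have hhppos : (0:ℝ) < h ^ p := Real.rpow_pos_of_pos hh0 p
  have h1 : 1 / h ^ p * C * h = 2 ^ (p - 1) * ((2:ℝ) ^ N) ^ (p - 1) := by
    calc 1 / h ^ p * C * h
        = 2 ^ (p - 1) * ((2:ℝ) ^ N) ^ (p - 1) * (h ^ (p - 1) * h) / h ^ p := by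
          rw [hCval]; ring
      _ = 2 ^ (p - 1) * ((2:ℝ) ^ N) ^ (p - 1) := by
          rw [hhp]; field_simp
  have h3 : ((2:ℝ) ^ N) ^ (p - 1) = (2:ℝ) ^ ((N:ℝ) * (p - 1)) := by
    rw [← Real.rpow_natCast 2 N, ← Real.rpow_mul (by norm_num)]
  rw [h1, h3]
  have h4 : (2:ℝ) ^ (p - 1) ≤ (2:ℝ) ^ p :=
    Real.rpow_le_rpow_of_exponent_le (by norm_num) (by linarith)
  exact mul_le_mul_of_nonneg_right h4 (Real.rpow_nonneg (by norm_num) _)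
end

section
/- Let (X,d) be a metric space, p ∈ [1,∞), N ∈ ℕ with N ≥ 1, and let σ : [0,1] → X be the piecewise-constant function built from points x_0,…,x_{2^N} ∈ X. Let a, b, m be positive integers with a < b and b + m ≤ 2^N, and set s_1 = a/2^N, s_2 = b/2^N, h = m/2^N. Then ∫_{s_1}^{s_2} d(σ(u+h),σ(u))^p / h^p du ≤ 2^{N(p−1)} · Σ_{k=a}^{b+m−1} d(x_{k+1}, x_k)^p. -/
open MeasureTheory Set Filter
open scoped ENNReal

private lemma double_count (g : ℕ → ℝ) (hg : ∀ k, 0 ≤ g k) (a b m : ℕ) (ha : 0 < a) :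
    ∑ i ∈ Finset.Ico a b, ∑ k ∈ Finset.Ico i (i + m), g k
      ≤ (m : ℝ) * ∑ k ∈ Finset.Ico a (b + m), g k := by
  have step1 : ∀ i ∈ Finset.Ico a b,
      ∑ k ∈ Finset.Ico i (i + m), g k
        = ∑ k ∈ Finset.Ico a (b + m), if k ∈ Finset.Ico i (i + m) then g k else 0 := by
    intro i hi
    rw [Finset.sum_ite_mem, Finset.inter_eq_right.mpr]
    intro k hk
    simp only [Finset.mem_Ico] at *
    omega
  rw [Finset.sum_congr rfl step1, Finset.sum_comm]
  have step2 : ∀ k ∈ Finset.Ico a (b + m),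
      (∑ i ∈ Finset.Ico a b, if k ∈ Finset.Ico i (i + m) then g k else 0)
        ≤ (m : ℝ) * g k := by
    intro k _
    rw [Finset.sum_ite, Finset.sum_const, Finset.sum_const_zero, add_zero, nsmul_eq_mul]
    apply mul_le_mul_of_nonneg_right _ (hg k)
    have hcard : (Finset.Ico a b).filter (fun i => k ∈ Finset.Ico i (i + m))
        ⊆ Finset.Ioc (k - m) k := by
      intro i hi
      simp only [Finset.mem_filter, Finset.mem_Ico, Finset.mem_Ioc] at *
      omega
    have h1 := Finset.card_le_card hcard
    rw [Nat.card_Ioc] at h1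
    have h2 : ((Finset.Ico a b).filter (fun i => k ∈ Finset.Ico i (i + m))).card ≤ m := by omega
    exact_mod_cast h2
  refine le_trans (Finset.sum_le_sum step2) (le_of_eq ?_)
  rw [Finset.mul_sum]

private lemma key_real {X : Type*} [MetricSpace X] (p : ℝ) (hp : 1 ≤ p)
    (N : ℕ) (x : ℕ → X) (a b m : ℕ) (ha : 0 < a) (hm : 0 < m) (hbm : b + m ≤ 2 ^ N) :
    ∑ i ∈ Finset.Ico a b,
        dist (x (i + m)) (x i) ^ p / ((m : ℝ) / 2 ^ N) ^ p * (1 / 2 ^ N)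
      ≤ (2 : ℝ) ^ ((N : ℝ) * (p - 1)) *
          ∑ k ∈ Finset.Icc a (b + m - 1), dist (x (k + 1)) (x k) ^ p := by
  have hc : (0 : ℝ) < 2 ^ N := by positivity
  have hmR : (0 : ℝ) < m := by exact_mod_cast hm
  set g : ℕ → ℝ := fun k => dist (x (k + 1)) (x k) ^ p with hg
  have hgnn : ∀ k, 0 ≤ g k := fun k => Real.rpow_nonneg dist_nonneg p
  -- pointwise bound
  have hpt : ∀ i, dist (x (i + m)) (x i) ^ p
      ≤ (m : ℝ) ^ (p - 1) * ∑ k ∈ Finset.Ico i (i + m), g k := by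
    intro i
    have htri : dist (x (i + m)) (x i)
        ≤ ∑ k ∈ Finset.Ico i (i + m), dist (x (k + 1)) (x k) := by
      rw [Finset.sum_Ico_eq_sum_range]
      have := dist_le_range_sum_dist (fun j => x (i + j)) m
      simp only [add_zero] at this
      calc dist (x (i + m)) (x i) = dist (x i) (x (i + m)) := dist_comm _ _
        _ ≤ ∑ j ∈ Finset.range m, dist (x (i + j)) (x (i + j + 1)) := this
        _ = ∑ j ∈ Finset.range (i + m - i), dist (x (i + j + 1)) (x (i + j)) := by
            rw [Nat.add_sub_cancel_left]
            exact Finset.sum_congr rfl fun j _ => dist_comm _ _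
    have h1 : dist (x (i + m)) (x i) ^ p
        ≤ (∑ k ∈ Finset.Ico i (i + m), dist (x (k + 1)) (x k)) ^ p :=
      Real.rpow_le_rpow dist_nonneg htri (le_trans zero_le_one hp)
    have h2 := Real.rpow_sum_le_const_mul_sum_rpow_of_nonneg (Finset.Ico i (i + m))
      (f := fun k => dist (x (k + 1)) (x k)) hp (fun k _ => dist_nonneg)
    rw [Nat.card_Ico, Nat.add_sub_cancel_left] at h2
    exact le_trans h1 (le_trans h2 (le_refl _))
  -- constant K
  set K : ℝ := 1 / ((m : ℝ) / 2 ^ N) ^ p * (1 / 2 ^ N) with hK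
  have hKnn : 0 ≤ K := by positivity
  have hrw : ∀ i, dist (x (i + m)) (x i) ^ p / ((m : ℝ) / 2 ^ N) ^ p * (1 / 2 ^ N)
      = dist (x (i + m)) (x i) ^ p * K := by intro i; rw [hK]; ring
  calc ∑ i ∈ Finset.Ico a b,
          dist (x (i + m)) (x i) ^ p / ((m : ℝ) / 2 ^ N) ^ p * (1 / 2 ^ N)
      = ∑ i ∈ Finset.Ico a b, dist (x (i + m)) (x i) ^ p * K := by
        exact Finset.sum_congr rfl fun i _ => hrw i
    _ ≤ ∑ i ∈ Finset.Ico a b, ((m : ℝ) ^ (p - 1) * ∑ k ∈ Finset.Ico i (i + m), g k) * K := by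
        apply Finset.sum_le_sum
        intro i _
        exact mul_le_mul_of_nonneg_right (hpt i) hKnn
    _ = (m : ℝ) ^ (p - 1) * K * ∑ i ∈ Finset.Ico a b, ∑ k ∈ Finset.Ico i (i + m), g k := by
        rw [Finset.mul_sum]; exact Finset.sum_congr rfl fun i _ => by ring
    _ ≤ (m : ℝ) ^ (p - 1) * K * ((m : ℝ) * ∑ k ∈ Finset.Ico a (b + m), g k) := by
        apply mul_le_mul_of_nonneg_left (double_count g hgnn a b m ha)
        positivity
    _ = ((m : ℝ) ^ (p - 1) * (m : ℝ) * K) * ∑ k ∈ Finset.Ico a (b + m), g k := by ring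
    _ = (2 : ℝ) ^ ((N : ℝ) * (p - 1)) * ∑ k ∈ Finset.Icc a (b + m - 1), g k := by
        congr 1
        · -- constants
          have hmp : (m : ℝ) ^ (p - 1) * (m : ℝ) = (m : ℝ) ^ p := by
            nth_rewrite 2 [← Real.rpow_one (m : ℝ)]
            rw [← Real.rpow_add hmR, sub_add_cancel]
          have hcp : ((2 : ℝ) ^ N) ^ (p - 1) * (2 : ℝ) ^ N = ((2 : ℝ) ^ N) ^ p := by
            nth_rewrite 2 [← Real.rpow_one ((2 : ℝ) ^ N)]
            rw [← Real.rpow_add hc, sub_add_cancel]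
          have hdiv : ((m : ℝ) / 2 ^ N) ^ p = (m : ℝ) ^ p / ((2 : ℝ) ^ N) ^ p :=
            Real.div_rpow hmR.le hc.le p
          have hrhs : (2 : ℝ) ^ ((N : ℝ) * (p - 1)) = ((2 : ℝ) ^ N) ^ (p - 1) := by
            rw [Real.rpow_mul (by norm_num : (0 : ℝ) ≤ 2), Real.rpow_natCast]
          have hmpne : (m : ℝ) ^ p ≠ 0 := (Real.rpow_pos_of_pos hmR p).ne'
          have hcpne : ((2 : ℝ) ^ N) ^ p ≠ 0 := (Real.rpow_pos_of_pos hc p).ne'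
          rw [hK, hmp, hdiv, hrhs, one_div_div]
          field_simp
          linear_combination -hcp
        · congr 1
          rw [← Finset.Ico_add_one_right_eq_Icc]
          congr 1
          omega
  
/-- localized dyadic shift estimate for the piecewise-constant interpolation
`σ` built from points `x 0, …, x (2^N)` on the dyadic grid of mesh `2^{-N}`. -/
theorem piecewise_constant_localized_shift {X : Type*} [MetricSpace X]
    (p : ℝ) (hp : 1 ≤ p) (N : ℕ) (hN : 1 ≤ N) (x : ℕ → X) (σ : ℝ → X)
    (hσ : ∀ i : ℕ, i < 2 ^ N → ∀ u : ℝ,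
      (i : ℝ) / 2 ^ N ≤ u → u < ((i : ℝ) + 1) / 2 ^ N → σ u = x i)
    (hσ1 : σ 1 = x (2 ^ N))
    (a b m : ℕ) (ha : 0 < a) (hb : 0 < b) (hm : 0 < m)
    (hab : a < b) (hbm : b + m ≤ 2 ^ N) :
    ∫⁻ u in Icc ((a : ℝ) / 2 ^ N) ((b : ℝ) / 2 ^ N),
        ENNReal.ofReal
          (dist (σ (u + (m : ℝ) / 2 ^ N)) (σ u) ^ p / ((m : ℝ) / 2 ^ N) ^ p)
      ≤ ENNReal.ofReal
          ((2 : ℝ) ^ ((N : ℝ) * (p - 1)) *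
            ∑ k ∈ Finset.Icc a (b + m - 1), dist (x (k + 1)) (x k) ^ p) := by
  have hc : (0 : ℝ) < 2 ^ N := by positivity
  have hh : (0 : ℝ) < (m : ℝ) / 2 ^ N := by positivity
  set f : ℝ → ℝ≥0∞ := fun u => ENNReal.ofReal
      (dist (σ (u + (m : ℝ) / 2 ^ N)) (σ u) ^ p / ((m : ℝ) / 2 ^ N) ^ p) with hf
  -- replace Icc by Ico
  rw [← setLIntegral_congr (Ico_ae_eq_Icc (μ := volume)
    (a := (a : ℝ) / 2 ^ N) (b := (b : ℝ) / 2 ^ N))]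
  -- subset of the dyadic union
  have hsub : Ico ((a : ℝ) / 2 ^ N) ((b : ℝ) / 2 ^ N)
      ⊆ ⋃ i ∈ Finset.Ico a b, Ico ((i : ℝ) / 2 ^ N) (((i : ℝ) + 1) / 2 ^ N) := by
    intro u hu
    obtain ⟨hu1, hu2⟩ := hu
    set i : ℕ := ⌊u * 2 ^ N⌋₊ with hi
    have hu0 : 0 ≤ u := le_trans (by positivity) hu1
    have hi1 : (i : ℝ) ≤ u * 2 ^ N := Nat.floor_le (by positivity)
    have hi2 : u * 2 ^ N < i + 1 := Nat.lt_floor_add_one _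
    have hai : a ≤ i := Nat.le_floor (by rw [div_le_iff₀ hc] at hu1; exact_mod_cast hu1)
    have hib : i < b := by
      have : (i : ℝ) < b := lt_of_le_of_lt hi1 (by rwa [lt_div_iff₀ hc] at hu2)
      exact_mod_cast this
    refine mem_biUnion (Finset.mem_Ico.mpr ⟨hai, hib⟩) ?_
    constructor
    · rw [div_le_iff₀ hc]; exact hi1
    · rw [lt_div_iff₀ hc]; exact hi2
  have hdisj : Set.PairwiseDisjoint (↑(Finset.Ico a b))
      (fun i : ℕ => Ico ((i : ℝ) / 2 ^ N) (((i : ℝ) + 1) / 2 ^ N)) := by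
    intro i _ j _ hij
    apply Set.disjoint_left.mpr
    intro u hu hu'
    obtain ⟨h1, h2⟩ := hu
    obtain ⟨h3, h4⟩ := hu'
    have e1 : (i : ℝ) < (j : ℝ) + 1 := by
      have := lt_of_le_of_lt h1 h4
      rw [div_lt_div_iff₀ hc hc] at this
      exact lt_of_mul_lt_mul_right this (le_of_lt hc)
    have e2 : (j : ℝ) < (i : ℝ) + 1 := by
      have := lt_of_le_of_lt h3 h2
      rw [div_lt_div_iff₀ hc hc] at this
      exact lt_of_mul_lt_mul_right this (le_of_lt hc)
    have e1' : i < j + 1 := by exact_mod_cast e1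
    have e2' : j < i + 1 := by exact_mod_cast e2
    omega
  -- per-piece constant value
  have hpiece : ∀ i ∈ Finset.Ico a b,
      ∫⁻ u in Ico ((i : ℝ) / 2 ^ N) (((i : ℝ) + 1) / 2 ^ N), f u
        = ENNReal.ofReal
            (dist (x (i + m)) (x i) ^ p / ((m : ℝ) / 2 ^ N) ^ p * (1 / 2 ^ N)) := by
    intro i hi
    obtain ⟨hai, hib⟩ := Finset.mem_Ico.mp hi
    have him : i + m < 2 ^ N := by omega
    have hiN : i < 2 ^ N := by omega
    have hconst : ∀ u ∈ Ico ((i : ℝ) / 2 ^ N) (((i : ℝ) + 1) / 2 ^ N),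
        f u = ENNReal.ofReal (dist (x (i + m)) (x i) ^ p / ((m : ℝ) / 2 ^ N) ^ p) := by
      intro u hu
      obtain ⟨h1, h2⟩ := hu
      have hσu : σ u = x i := hσ i hiN u h1 h2
      have hadd : ((i : ℝ) + (m : ℝ)) / 2 ^ N = (i : ℝ) / 2 ^ N + (m : ℝ) / 2 ^ N :=
        add_div _ _ _
      have hσu' : σ (u + (m : ℝ) / 2 ^ N) = x (i + m) := by
        apply hσ (i + m) him
        · push_cast; rw [hadd]; linarith
        · push_cast
          have : ((i : ℝ) + (m : ℝ) + 1) / 2 ^ N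
              = ((i : ℝ) + 1) / 2 ^ N + (m : ℝ) / 2 ^ N := by ring
          rw [this]; linarith
      rw [hf]; simp only; rw [hσu, hσu']
    rw [setLIntegral_congr_fun measurableSet_Ico hconst,
      setLIntegral_const, Real.volume_Ico]
    rw [← ENNReal.ofReal_mul (by positivity)]
    congr 1
    congr 1
    field_simp
    ring
  calc ∫⁻ u in Ico ((a : ℝ) / 2 ^ N) ((b : ℝ) / 2 ^ N), f u
      ≤ ∫⁻ u in ⋃ i ∈ Finset.Ico a b, Ico ((i : ℝ) / 2 ^ N) (((i : ℝ) + 1) / 2 ^ N), f u :=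
        lintegral_mono_set hsub
    _ = ∑ i ∈ Finset.Ico a b,
          ∫⁻ u in Ico ((i : ℝ) / 2 ^ N) (((i : ℝ) + 1) / 2 ^ N), f u :=
        lintegral_biUnion_finset hdisj (fun i _ => measurableSet_Ico) f
    _ = ∑ i ∈ Finset.Ico a b, ENNReal.ofReal
          (dist (x (i + m)) (x i) ^ p / ((m : ℝ) / 2 ^ N) ^ p * (1 / 2 ^ N)) :=
        Finset.sum_congr rfl hpiece
    _ = ENNReal.ofReal (∑ i ∈ Finset.Ico a b,
          dist (x (i + m)) (x i) ^ p / ((m : ℝ) / 2 ^ N) ^ p * (1 / 2 ^ N)) :=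
        (ENNReal.ofReal_sum_of_nonneg (fun i _ => by positivity)).symm
    _ ≤ ENNReal.ofReal
          ((2 : ℝ) ^ ((N : ℝ) * (p - 1)) *
            ∑ k ∈ Finset.Icc a (b + m - 1), dist (x (k + 1)) (x k) ^ p) :=
        ENNReal.ofReal_le_ofReal (key_real p hp N x a b m ha hm hbm)
end

section
/- Let (Y,d) be a metric space, p ∈ (1,∞), and let γ : [0,1] → Y and m : [0,1] → [0,∞) be such that m is Lebesgue measurable, ∫_0^1 m(r)^p dr < ∞, and d(γ(u),γ(v)) ≤ ∫_u^v m(r) dr for all 0 ≤ u ≤ v ≤ 1. Then for every partition 0 = t_0 < t_1 < … < t_n = 1, Σ_{i=0}^{n−1} d(γ(t_i), γ(t_{i+1}))^p ≤ ( max_{0 ≤ i ≤ n−1} (t_{i+1} − t_i) )^{p−1} · ∫_0^1 m(r)^p dr. -/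
open MeasureTheory Set Filter
open scoped ENNReal

-- per-interval Hölder estimate
lemma interval_holder {Y : Type*} [MetricSpace Y]
    (p : ℝ) (hp : 1 < p)
    (γ : ℝ → Y) (m : ℝ → ℝ)
    (hm_meas : Measurable m) (hm_nonneg : ∀ r ∈ Icc (0:ℝ) 1, 0 ≤ m r)
    (hm_fin : ∫⁻ r in Icc (0:ℝ) 1, ENNReal.ofReal (m r ^ p) < ⊤)
    (hac : ∀ u v : ℝ, 0 ≤ u → u ≤ v → v ≤ 1 →
      dist (γ u) (γ v) ≤ ∫ r in u..v, m r)
    (a b : ℝ) (ha : 0 ≤ a) (hab : a ≤ b) (hb : b ≤ 1) :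
    dist (γ a) (γ b) ^ p
      ≤ (b - a) ^ (p - 1) * (∫⁻ r in Ioc a b, ENNReal.ofReal (m r ^ p)).toReal := by
  have hp0 : (0:ℝ) < p := lt_trans one_pos hp
  have hsub : Ioc a b ⊆ Icc (0:ℝ) 1 := fun x hx => ⟨le_trans ha (le_of_lt hx.1), le_trans hx.2 hb⟩
  set B : ℝ≥0∞ := ∫⁻ r in Ioc a b, ENNReal.ofReal (m r ^ p) with hB
  have hBfin : B < ⊤ := lt_of_le_of_lt (lintegral_mono_set hsub) hm_fin
  -- rewrite integrand on Ioc a b : ofReal (m r ^ p) = (ofReal (m r)) ^ p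
  have hBeq : B = ∫⁻ r in Ioc a b, (ENNReal.ofReal (m r)) ^ p := by
    rw [hB]
    refine setLIntegral_congr_fun measurableSet_Ioc ?_
    intro x hx
    dsimp only
    rw [ENNReal.ofReal_rpow_of_nonneg (hm_nonneg x (hsub hx)) (le_of_lt hp0)]
  -- dist bound via integral
  have hdist : dist (γ a) (γ b) ≤ (∫⁻ r in Ioc a b, ENNReal.ofReal (m r)).toReal := by
    have h1 := hac a b ha hab hb
    rwa [intervalIntegral.integral_of_le hab,
      integral_eq_lintegral_of_nonneg_ae
        (Filter.Eventually.filter_mono (ae_mono (Measure.restrict_mono hsub le_rfl))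
          ((ae_restrict_iff' measurableSet_Icc).2 (Filter.Eventually.of_forall hm_nonneg)))
        hm_meas.aestronglyMeasurable.restrict] at h1
  -- Hölder
  set q : ℝ := p / (p - 1) with hq
  have hpq : p.HolderConjugate q := Real.HolderConjugate.conjExponent hp
  have hold : (∫⁻ r in Ioc a b, ENNReal.ofReal (m r))
      ≤ B ^ (1/p) * (ENNReal.ofReal (b - a)) ^ (1/q) := by
    have := ENNReal.lintegral_mul_le_Lp_mul_Lq ((volume : Measure ℝ).restrict (Ioc a b)) hpq
      (f := fun r => ENNReal.ofReal (m r)) (g := fun _ => 1)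
      (hm_meas.ennreal_ofReal.aemeasurable) aemeasurable_const
    simpa [hBeq, ENNReal.one_rpow, Real.volume_Ioc] using this
  -- pass to reals
  have hRfin : B ^ (1/p) * (ENNReal.ofReal (b - a)) ^ (1/q) ≠ ⊤ := by
    apply ENNReal.mul_ne_top
    · exact ENNReal.rpow_ne_top_of_nonneg (by positivity) hBfin.ne
    · exact ENNReal.rpow_ne_top_of_nonneg (one_div_nonneg.2 hpq.symm.pos.le) ENNReal.ofReal_ne_top
  have hdist2 : dist (γ a) (γ b) ≤ B.toReal ^ (1/p) * (b - a) ^ (1/q) := by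
    refine le_trans hdist ?_
    calc (∫⁻ r in Ioc a b, ENNReal.ofReal (m r)).toReal
        ≤ (B ^ (1/p) * (ENNReal.ofReal (b - a)) ^ (1/q)).toReal :=
          ENNReal.toReal_mono hRfin hold
      _ = B.toReal ^ (1/p) * (b - a) ^ (1/q) := by
          rw [ENNReal.toReal_mul, ← ENNReal.toReal_rpow, ← ENNReal.toReal_rpow,
            ENNReal.toReal_ofReal (by linarith)]
  have hBtr : 0 ≤ B.toReal := ENNReal.toReal_nonneg
  have hba : 0 ≤ b - a := by linarith
  calc dist (γ a) (γ b) ^ p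
      ≤ (B.toReal ^ (1/p) * (b - a) ^ (1/q)) ^ p :=
        Real.rpow_le_rpow dist_nonneg hdist2 (le_of_lt hp0)
    _ = B.toReal * (b - a) ^ (p - 1) := by
        rw [Real.mul_rpow (by positivity) (by positivity),
          ← Real.rpow_mul hBtr, ← Real.rpow_mul hba,
          one_div, inv_mul_cancel₀ (ne_of_gt hp0), Real.rpow_one]
        congr 1
        rw [hq]
        field_simp
    _ = (b - a) ^ (p - 1) * B.toReal := mul_comm _ _

/-- partition-energy estimate for an `AC^p` curve with witness `m`:
the `p`-variation over any partition is controlled by the mesh to the power `p-1`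
times the `p`-energy of `m`. -/
theorem acp_partition_energy_estimate {Y : Type*} [MetricSpace Y]
    (p : ℝ) (hp : 1 < p)
    (γ : ℝ → Y) (m : ℝ → ℝ)
    (hm_meas : Measurable m) (hm_nonneg : ∀ r ∈ Icc (0:ℝ) 1, 0 ≤ m r)
    (hm_fin : ∫⁻ r in Icc (0:ℝ) 1, ENNReal.ofReal (m r ^ p) < ⊤)
    (hac : ∀ u v : ℝ, 0 ≤ u → u ≤ v → v ≤ 1 →
      dist (γ u) (γ v) ≤ ∫ r in u..v, m r)
    (n : ℕ) (hn : 0 < n) (t : ℕ → ℝ)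
    (ht0 : t 0 = 0) (htn : t n = 1)
    (hmono : ∀ i < n, t i < t (i + 1)) :
    ∑ i ∈ Finset.range n, dist (γ (t i)) (γ (t (i + 1))) ^ p
      ≤ ((Finset.range n).sup' ⟨0, Finset.mem_range.mpr hn⟩
            (fun i => t (i + 1) - t i)) ^ (p - 1)
        * (∫⁻ r in Icc (0:ℝ) 1, ENNReal.ofReal (m r ^ p)).toReal := by
  -- monotonicity of t on {0,...,n}
  have tmono : ∀ i j, i ≤ j → j ≤ n → t i ≤ t j := by
    intro i j hij hjn
    induction j with
    | zero => simp_all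
    | succ k ih =>
      rcases Nat.lt_or_ge i (k+1) with h | h
      · exact le_trans (ih (Nat.lt_succ_iff.1 h) (le_trans (Nat.le_succ k) hjn))
          (le_of_lt (hmono k (Nat.lt_of_succ_le hjn)))
      · have : i = k + 1 := le_antisymm hij h
        simp [this]
  have ht01 : ∀ i ≤ n, 0 ≤ t i ∧ t i ≤ 1 := fun i hi =>
    ⟨ht0 ▸ tmono 0 i (Nat.zero_le i) hi, htn ▸ tmono i n hi le_rfl⟩
  set M := ((Finset.range n).sup' ⟨0, Finset.mem_range.mpr hn⟩ (fun i => t (i + 1) - t i))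
  set B : ℕ → ℝ≥0∞ := fun i => ∫⁻ r in Ioc (t i) (t (i+1)), ENNReal.ofReal (m r ^ p) with hBdef
  have hM0 : 0 ≤ M := by
    have := Finset.le_sup' (fun i => t (i + 1) - t i) (Finset.mem_range.mpr hn)
    have h0 := hmono 0 hn
    linarith
  have hstep : ∀ i ∈ Finset.range n,
      dist (γ (t i)) (γ (t (i+1))) ^ p ≤ M ^ (p - 1) * (B i).toReal := by
    intro i hi
    rw [Finset.mem_range] at hi
    have h1 := (ht01 i (le_of_lt hi)).1
    have h2 := le_of_lt (hmono i hi)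
    have h3 := (ht01 (i+1) hi).2
    refine le_trans (interval_holder p hp γ m hm_meas hm_nonneg hm_fin hac _ _ h1 h2 h3) ?_
    apply mul_le_mul_of_nonneg_right _ ENNReal.toReal_nonneg
    have hle : t (i+1) - t i ≤ M :=
      Finset.le_sup' (fun j => t (j+1) - t j) (Finset.mem_range.mpr hi)
    have hδ : 0 ≤ t (i+1) - t i := by linarith
    exact Real.rpow_le_rpow hδ hle (by linarith)
  have hBfin : ∀ i ∈ Finset.range n, B i ≠ ⊤ := by
    intro i hi
    rw [Finset.mem_range] at hi
    refine ne_top_of_le_ne_top hm_fin.ne (lintegral_mono_set fun x hx => ?_)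
    exact ⟨le_trans (ht01 i hi.le).1 hx.1.le, le_trans hx.2 (ht01 (i+1) hi).2⟩
  -- sum of lintegrals over the Iocs
  have hsumB : ∀ k ≤ n, ∑ i ∈ Finset.range k, B i
      = ∫⁻ r in Ioc (t 0) (t k), ENNReal.ofReal (m r ^ p) := by
    intro k hk
    induction k with
    | zero => simp
    | succ j ih =>
      rw [Finset.sum_range_succ, ih (le_trans (Nat.le_succ j) hk)]
      rw [← lintegral_union measurableSet_Ioc (Set.Ioc_disjoint_Ioc_of_le le_rfl),
        Set.Ioc_union_Ioc_eq_Ioc (tmono 0 j (Nat.zero_le j) (le_trans (Nat.le_succ j) hk))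
          (le_of_lt (hmono j (Nat.lt_of_succ_le hk)))]
  have hsum_le : ∑ i ∈ Finset.range n, (B i).toReal
      ≤ (∫⁻ r in Icc (0:ℝ) 1, ENNReal.ofReal (m r ^ p)).toReal := by
    rw [← ENNReal.toReal_sum hBfin]
    apply ENNReal.toReal_mono hm_fin.ne
    rw [hsumB n le_rfl, ht0, htn]
    exact lintegral_mono_set Set.Ioc_subset_Icc_self
  calc ∑ i ∈ Finset.range n, dist (γ (t i)) (γ (t (i + 1))) ^ p
      ≤ ∑ i ∈ Finset.range n, M ^ (p - 1) * (B i).toReal := Finset.sum_le_sum hstep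
    _ = M ^ (p - 1) * ∑ i ∈ Finset.range n, (B i).toReal := by rw [Finset.mul_sum]
    _ ≤ M ^ (p - 1) * (∫⁻ r in Icc (0:ℝ) 1, ENNReal.ofReal (m r ^ p)).toReal :=
        mul_le_mul_of_nonneg_left hsum_le (Real.rpow_nonneg hM0 _)
end

section
/- Let (Y,d) be a metric space, p ∈ (1,∞), and let f : [0,1] → Y admit a Lebesgue-measurable m : [0,1] → [0,∞) with ∫_0^1 m(r)^p dr < ∞ and d(f(u),f(v)) ≤ ∫_u^v m(r) dr for all 0 ≤ u ≤ v ≤ 1. Let |f'|(u) = limsup_{v→u, v≠u} d(f(u),f(v))/|u−v| (with 0/0 = 0). If d(f(0),f(1))^p = ∫_0^1 |f'|(u)^p du, then f is a constant-speed minimizing geodesic: d(f(u),f(v)) = |u−v| · d(f(0),f(1)) for all u,v ∈ [0,1]. -/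
open MeasureTheory Set Filter
open scoped ENNReal Topology


private lemma bern_le {p : ℝ} (hp : 1 < p) {x : ℝ} (hx : 0 ≤ x) :
    x ^ (1/p) ≤ x / p + (1 - 1/p) := by
  have hp0 : 0 < p := by linarith
  have hyx : (x ^ (1/p)) ^ p = x := by
    rw [one_div]; exact Real.rpow_inv_rpow hx hp0.ne'
  have hy0 : 0 ≤ x ^ (1/p) := Real.rpow_nonneg hx _
  have hb := one_add_mul_self_le_rpow_one_add (s := x ^ (1/p) - 1) (by linarith) hp.le
  rw [show (1 : ℝ) + (x ^ (1/p) - 1) = x ^ (1/p) by ring, hyx] at hb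
  rw [div_add' _ _ _ hp0.ne', le_div_iff₀ hp0]
  have hinv : (1/p)*p = 1 := by field_simp
  nlinarith

private lemma bern_eq {p : ℝ} (hp : 1 < p) {x : ℝ} (hx : 0 ≤ x)
    (heq : x ^ (1/p) = x / p + (1 - 1/p)) : x = 1 := by
  have hp0 : 0 < p := by linarith
  by_contra hne
  have hyx : (x ^ (1/p)) ^ p = x := by
    rw [one_div]; exact Real.rpow_inv_rpow hx hp0.ne'
  have hy0 : 0 ≤ x ^ (1/p) := Real.rpow_nonneg hx _
  have hs' : x ^ (1/p) - 1 ≠ 0 := by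
    intro h
    apply hne
    have : x ^ (1/p) = 1 := by linarith
    rw [← hyx, this, Real.one_rpow]
  have hb := one_add_mul_self_lt_rpow_one_add (s := x ^ (1/p) - 1) (by linarith) hs' hp
  rw [show (1 : ℝ) + (x ^ (1/p) - 1) = x ^ (1/p) by ring, hyx] at hb
  rw [heq] at hb
  have h1 : p * (x / p) = x := by field_simp
  have h2 : p * (x / p + (1 - 1 / p) - 1) = x - 1 := by field_simp; ring
  linarith

private lemma young_core {p : ℝ} (hp : 1 < p) {t e L : ℝ} (ht : 0 < t) (he : 0 ≤ e)
    (hL : 0 < L) :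
    t ^ (1 - 1/p) * e ^ (1/p) = t * L * (e / (t * L ^ p)) ^ (1/p) := by
  have hp0 : 0 < p := by linarith
  have hLp : (0:ℝ) < L ^ p := Real.rpow_pos_of_pos hL p
  have h1 : (e / (t * L ^ p)) ^ (1/p) = e ^ (1/p) / ((t * L ^ p) ^ (1/p)) :=
    Real.div_rpow he (by positivity) (1/p)
  have h2 : (t * L ^ p) ^ (1/p) = t ^ (1/p) * (L ^ p) ^ (1/p) :=
    Real.mul_rpow ht.le hLp.le
  have h3 : (L ^ p) ^ (1/p) = L := by
    rw [← Real.rpow_mul hL.le, mul_one_div_cancel hp0.ne', Real.rpow_one]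
  have h4 : t ^ (1 - 1/p) * t ^ (1/p) = t := by
    rw [← Real.rpow_add ht, sub_add_cancel, Real.rpow_one]
  have ht1 : (0:ℝ) < t ^ (1/p) := Real.rpow_pos_of_pos ht _
  rw [h1, h2, h3]
  have h5 : t ^ (1 - 1/p) = t / t ^ (1/p) := by
    rw [Real.rpow_sub ht, Real.rpow_one]
  rw [h5]
  field_simp

private lemma young_bound {p : ℝ} (hp : 1 < p) {t e L : ℝ} (ht : 0 ≤ t) (he : 0 ≤ e)
    (hL : 0 < L) :
    t ^ (1 - 1/p) * e ^ (1/p) ≤ (e / L ^ (p-1) + t * L * (p - 1)) / p := by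
  have hp0 : 0 < p := by linarith
  have hA : (0:ℝ) < L ^ (p-1) := Real.rpow_pos_of_pos hL _
  have hLp : (0:ℝ) < L ^ p := Real.rpow_pos_of_pos hL p
  have hLpA : L ^ p = L ^ (p-1) * L := by
    rw [← Real.rpow_add_one hL.ne' (p-1), sub_add_cancel]
  rcases eq_or_lt_of_le ht with h | ht
  · have hpos : 0 < 1 - 1/p := by
      have : 1/p < 1 := by rw [div_lt_one hp0]; exact hp
      linarith
    rw [← h, Real.zero_rpow hpos.ne', zero_mul, zero_mul, zero_mul, add_zero]
    positivity
  · have hx : 0 ≤ e / (t * L ^ p) := by positivity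
    have key := bern_le hp hx
    have h0 := young_core hp ht he hL
    calc t ^ (1 - 1/p) * e ^ (1/p) = t * L * (e / (t * L ^ p)) ^ (1/p) := h0
      _ ≤ t * L * (e / (t * L ^ p) / p + (1 - 1/p)) := by
          apply mul_le_mul_of_nonneg_left key (by positivity)
      _ = (e / L ^ (p-1) + t * L * (p - 1)) / p := by
          rw [hLpA]; field_simp

private lemma young_eq {p : ℝ} (hp : 1 < p) {t e L : ℝ} (ht : 0 < t) (he : 0 ≤ e)
    (hL : 0 < L)
    (heq : t ^ (1 - 1/p) * e ^ (1/p) = (e / L ^ (p-1) + t * L * (p - 1)) / p) :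
    e = t * L ^ p := by
  have hp0 : 0 < p := by linarith
  have hA : (0:ℝ) < L ^ (p-1) := Real.rpow_pos_of_pos hL _
  have hLp : (0:ℝ) < L ^ p := Real.rpow_pos_of_pos hL p
  have hLpA : L ^ p = L ^ (p-1) * L := by
    rw [← Real.rpow_add_one hL.ne' (p-1), sub_add_cancel]
  have hx : 0 ≤ e / (t * L ^ p) := by positivity
  have h0 := young_core hp ht he hL
  have h1 : t * L * (e / (t * L ^ p)) ^ (1/p)
      = t * L * (e / (t * L ^ p) / p + (1 - 1/p)) := by
    rw [← h0, heq, hLpA]; field_simp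
  have h2 : (e / (t * L ^ p)) ^ (1/p) = e / (t * L ^ p) / p + (1 - 1/p) := by
    have htL : 0 < t * L := by positivity
    exact mul_left_cancel₀ htL.ne' h1
  have h3 := bern_eq hp hx h2
  field_simp at h3
  linarith [h3]


private lemma lemA {Y : Type*} [MetricSpace Y] (f : ℝ → Y) (m : ℝ → ℝ)
    (hm_meas : Measurable m) (hm_nonneg : ∀ r ∈ Icc (0:ℝ) 1, 0 ≤ m r)
    (hm_int : IntegrableOn m (Icc (0:ℝ) 1))
    (hac : ∀ u v : ℝ, 0 ≤ u → u ≤ v → v ≤ 1 → dist (f u) (f v) ≤ ∫ r in u..v, m r)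
    {a b : ℝ} (ha : 0 ≤ a) (hab : a ≤ b) (hb : b ≤ 1) :
    ENNReal.ofReal (dist (f a) (f b)) ≤
      ∫⁻ u in Icc a b, limsup (fun v : ℝ => ENNReal.ofReal (dist (f u) (f v) / |v - u|))
        (nhdsWithin u (Icc (0:ℝ) 1 \ {u})) := by
  rcases eq_or_lt_of_le hab with rfl | hab
  · simp
  set ψ : ℝ → ℝ≥0∞ := fun u => limsup (fun v : ℝ => ENNReal.ofReal (dist (f u) (f v) / |v - u|))
      (nhdsWithin u (Icc (0:ℝ) 1 \ {u})) with hψ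
  set m₀ : ℝ → ℝ := (Ioc a b).indicator m with hm₀
  have hsub : Ioc a b ⊆ Icc (0:ℝ) 1 := fun r hr => ⟨ha.trans hr.1.le, hr.2.trans hb⟩
  have hm₀_meas : Measurable m₀ := hm_meas.indicator measurableSet_Ioc
  have hm₀_nonneg : ∀ r, 0 ≤ m₀ r := by
    intro r
    by_cases hr : r ∈ Ioc a b
    · rw [hm₀, indicator_of_mem hr]; exact hm_nonneg r (hsub hr)
    · rw [hm₀, indicator_of_notMem hr]
  have hm₀_int : Integrable m₀ := by
    rw [hm₀, integrable_indicator_iff measurableSet_Ioc]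
    exact hm_int.mono_set hsub
  set M : ℝ → ℝ := fun t => ∫ s in (0:ℝ)..t, m₀ s with hM
  have hM_cont : Continuous M :=
    intervalIntegral.continuous_primitive (fun u v => hm₀_int.intervalIntegrable) 0
  have hMdiff : ∀ u v : ℝ, M v - M u = ∫ s in u..v, m₀ s := by
    intro u v
    rw [hM]
    exact intervalIntegral.integral_interval_sub_left hm₀_int.intervalIntegrable
      hm₀_int.intervalIntegrable
  have hM_mono : Monotone M := by
    intro u v huv
    have h1 := hMdiff u v
    have h2 : 0 ≤ ∫ s in u..v, m₀ s :=
      intervalIntegral.integral_nonneg huv (fun x _ => hm₀_nonneg x)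
    linarith
  have hflat : ∀ u v : ℝ, u ≤ v → (∀ r ∈ Ioc u v, m₀ r = 0) → M u = M v := by
    intro u v huv h0
    have h := hMdiff u v
    rw [intervalIntegral.integral_of_le huv] at h
    have h2 : ∫ s in Ioc u v, m₀ s = 0 := by
      rw [setIntegral_congr_fun measurableSet_Ioc (fun r hr => h0 r hr)]
      simp
    linarith
  set proj : ℝ → ℝ := fun t => max a (min t b) with hproj
  have hproj_mem : ∀ t, proj t ∈ Icc a b := fun t =>
    ⟨le_max_left _ _, max_le hab.le (min_le_right _ _)⟩
  have hproj_mono : Monotone proj := fun u v huv =>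
    max_le_max le_rfl (min_le_min huv le_rfl)
  have hproj_eq : ∀ t ∈ Icc a b, proj t = t := by
    intro t ht
    rw [hproj]
    simp only [min_eq_left ht.2, max_eq_right ht.1]
  have hMproj : ∀ t, M (proj t) = M t := by
    intro t
    rcases le_total t a with h | h
    · have hpt : proj t = a := by
        show max a (min t b) = a
        rw [min_eq_left (h.trans hab.le), max_eq_left h]
      rw [hpt]
      exact (hflat t a h (fun r hr => by
        rw [hm₀]
        exact indicator_of_notMem (fun hmem => (not_lt.2 hr.2) hmem.1) m)).symm
    · rcases le_total t b with h' | h'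
      · rw [hproj_eq t ⟨h, h'⟩]
      · have hpt : proj t = b := by
          show max a (min t b) = b
          rw [min_eq_right h', max_eq_right hab.le]
        rw [hpt]
        exact hflat b t h' (fun r hr => by
          rw [hm₀]
          exact indicator_of_notMem (fun hmem => absurd hr.1 (not_lt.2 hmem.2)) m)
  set g : ℝ → ℝ := fun t => dist (f a) (f (proj t)) with hg
  have hg_bound : ∀ u v : ℝ, u ≤ v → |g v - g u| ≤ M v - M u := by
    intro u v huv
    have h1 : |g v - g u| ≤ dist (f (proj v)) (f (proj u)) := by
      rw [hg]
      simp only [dist_comm (f a)]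
      exact abs_dist_sub_le _ _ _
    have h2 : dist (f (proj u)) (f (proj v)) ≤ ∫ r in (proj u)..(proj v), m r :=
      hac _ _ (ha.trans (hproj_mem u).1) (hproj_mono huv) ((hproj_mem v).2.trans hb)
    have h3 : ∫ r in (proj u)..(proj v), m r = ∫ r in (proj u)..(proj v), m₀ r := by
      rw [intervalIntegral.integral_of_le (hproj_mono huv),
        intervalIntegral.integral_of_le (hproj_mono huv)]
      apply setIntegral_congr_fun measurableSet_Ioc
      intro r hr
      rw [hm₀, indicator_of_mem (Set.mem_Ioc.2
        ⟨(hproj_mem u).1.trans_lt hr.1, hr.2.trans (hproj_mem v).2⟩)]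
    have h4 : M v - M u = ∫ r in (proj u)..(proj v), m₀ r := by
      rw [← hMproj u, ← hMproj v]; exact hMdiff _ _
    rw [dist_comm (f (proj v)) (f (proj u))] at h1
    calc |g v - g u| ≤ dist (f (proj u)) (f (proj v)) := h1
      _ ≤ ∫ r in (proj u)..(proj v), m r := h2
      _ = M v - M u := by rw [h3, ← h4]
  have hg_cont : Continuous g := by
    rw [continuous_iff_continuousAt]
    intro x
    have key : ∀ v, dist (g v) (g x) ≤ |M v - M x| := by
      intro v
      rcases le_total v x with h | h
      · rw [Real.dist_eq, abs_sub_comm (g v) (g x), abs_sub_comm (M v) (M x)]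
        exact (hg_bound v x h).trans (le_abs_self _)
      · rw [Real.dist_eq]
        exact (hg_bound x v h).trans (le_abs_self _)
    have htend : Tendsto (fun v => |M v - M x|) (𝓝 x) (𝓝 0) := by
      have h1 : Tendsto (fun v => M v - M x) (𝓝 x) (𝓝 (M x - M x)) :=
        (hM_cont.tendsto x).sub_const _
      rw [sub_self] at h1
      simpa using h1.abs
    exact tendsto_iff_dist_tendsto_zero.2 (squeeze_zero (fun v => dist_nonneg) key htend)
  set φ : ℝ → ℝ := fun t => M t - g t with hφ
  have hφ_mono : Monotone φ := by
    intro u v huv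
    have h1 := abs_le.1 (hg_bound u v huv)
    simp only [hφ]
    linarith [h1.2]
  have hφ_cont : Continuous φ := hM_cont.sub hg_cont
  set D : ℝ → ℝ := deriv φ with hD
  have hD_meas : Measurable D := measurable_deriv φ
  have hdiff := hφ_mono.ae_differentiableAt
  have hD_nonneg : ∀ᵐ t, 0 ≤ D t := by
    filter_upwards [hdiff] with t ht
    have hs := hasDerivAt_iff_tendsto_slope.1 ht.hasDerivAt
    have hs' : Tendsto (slope φ t) (𝓝[>] t) (𝓝 (D t)) :=
      hs.mono_left (nhdsWithin_mono t (fun y hy => ne_of_gt hy))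
    refine ge_of_tendsto hs' ?_
    filter_upwards [self_mem_nhdsWithin] with v hv
    rw [slope_def_field]
    have : t < v := hv
    apply div_nonneg _ (by linarith)
    have := hφ_mono this.le
    linarith
  set ε : ℕ → ℝ := fun n => 1 / (n+1) with hε
  have hεpos : ∀ n, 0 < ε n := fun n => by positivity
  have hε0 : Tendsto ε atTop (𝓝 0) := tendsto_one_div_add_atTop_nhds_zero_nat
  set F : ℕ → ℝ → ℝ≥0∞ := fun n t => ENNReal.ofReal ((φ (t + ε n) - φ t) / ε n) with hF
  have hF_meas : ∀ n, Measurable (F n) := fun n =>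
    (((hφ_cont.comp (continuous_id.add continuous_const)).sub hφ_cont).div_const _).measurable.ennreal_ofReal
  have hliminf : ∀ᵐ t, ENNReal.ofReal (D t) ≤ liminf (fun n => F n t) atTop := by
    filter_upwards [hdiff] with t ht
    have hs := hasDerivAt_iff_tendsto_slope.1 ht.hasDerivAt
    have hy : Tendsto (fun n => t + ε n) atTop (𝓝[≠] t) := by
      apply tendsto_nhdsWithin_of_tendsto_nhds_of_eventually_within
      · simpa using tendsto_const_nhds.add hε0
      · filter_upwards with n
        show t + ε n ≠ t
        have := hεpos n; intro hh; nlinarith [hh]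
    have hq : Tendsto (fun n => slope φ t (t + ε n)) atTop (𝓝 (D t)) := hs.comp hy
    have hq' : Tendsto (fun n => (φ (t + ε n) - φ t) / ε n) atTop (𝓝 (D t)) := by
      refine hq.congr (fun n => ?_)
      rw [slope_def_field, add_sub_cancel_left]
    have hFt : Tendsto (fun n => F n t) atTop (𝓝 (ENNReal.ofReal (D t))) :=
      (ENNReal.continuous_ofReal.tendsto _).comp hq'
    exact hFt.liminf_eq.ge
  have hFbound : ∀ n, ∫⁻ t in Icc a b, F n t ≤ ENNReal.ofReal (φ (b + ε n) - φ a) := by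
    intro n
    have hcont : Continuous (fun t => (φ (t + ε n) - φ t) / ε n) :=
      ((hφ_cont.comp (continuous_id.add continuous_const)).sub hφ_cont).div_const _
    have hint : IntegrableOn (fun t => (φ (t + ε n) - φ t) / ε n) (Icc a b) :=
      hcont.integrableOn_Icc
    have hnn : 0 ≤ᵐ[volume.restrict (Icc a b)] fun t => (φ (t + ε n) - φ t) / ε n := by
      refine Eventually.of_forall (fun t => ?_)
      have h1 : φ t ≤ φ (t + ε n) := hφ_mono (by linarith [hεpos n])
      exact div_nonneg (by linarith) (hεpos n).le
    rw [hF, ← ofReal_integral_eq_lintegral_ofReal hint hnn]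
    apply ENNReal.ofReal_le_ofReal
    have I : ∀ c d : ℝ, IntervalIntegrable φ volume c d := fun c d =>
      hφ_cont.intervalIntegrable c d
    have I' : IntervalIntegrable (fun t => φ (t + ε n)) volume a b :=
      (hφ_cont.comp (continuous_id.add continuous_const)).intervalIntegrable a b
    have h1 : ∫ t in Icc a b, (φ (t + ε n) - φ t) / ε n
        = (∫ t in a..b, (φ (t + ε n) - φ t)) / ε n := by
      rw [intervalIntegral.integral_of_le hab.le, ← integral_Icc_eq_integral_Ioc, integral_div]
    have h2 : ∫ t in a..b, (φ (t + ε n) - φ t)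
        = (∫ t in b..(b + ε n), φ t) - ∫ t in a..(a + ε n), φ t := by
      have E1 := intervalIntegral.integral_add_adjacent_intervals (I a (a + ε n))
        (I (a + ε n) (b + ε n))
      have E2 := intervalIntegral.integral_add_adjacent_intervals (I a b) (I b (b + ε n))
      rw [intervalIntegral.integral_sub I' (I a b),
        intervalIntegral.integral_comp_add_right φ (ε n)]
      linarith
    have h3 : ∫ t in b..(b + ε n), φ t ≤ ε n * φ (b + ε n) := by
      have hc := intervalIntegral.integral_mono_on (by linarith [hεpos n] : b ≤ b + ε n)
        (I b (b + ε n)) intervalIntegrable_const (fun x hx => hφ_mono hx.2)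
      rwa [intervalIntegral.integral_const, smul_eq_mul, add_sub_cancel_left] at hc
    have h4 : ε n * φ a ≤ ∫ t in a..(a + ε n), φ t := by
      have hc := intervalIntegral.integral_mono_on (by linarith [hεpos n] : a ≤ a + ε n)
        intervalIntegrable_const (I a (a + ε n)) (fun x hx => hφ_mono hx.1)
      rwa [intervalIntegral.integral_const, smul_eq_mul, add_sub_cancel_left] at hc
    rw [h1, h2, div_le_iff₀ (hεpos n)]
    nlinarith [hεpos n]
  have hA3 : ∫⁻ t in Icc a b, ENNReal.ofReal (D t) ≤ ENNReal.ofReal (φ b - φ a) := by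
    calc ∫⁻ t in Icc a b, ENNReal.ofReal (D t)
        ≤ ∫⁻ t in Icc a b, liminf (fun n => F n t) atTop :=
          lintegral_mono_ae (ae_restrict_of_ae hliminf)
      _ ≤ liminf (fun n => ∫⁻ t in Icc a b, F n t) atTop :=
          lintegral_liminf_le (fun n => hF_meas n)
      _ ≤ liminf (fun n => ENNReal.ofReal (φ (b + ε n) - φ a)) atTop :=
          liminf_le_liminf (Eventually.of_forall hFbound)
      _ = ENNReal.ofReal (φ b - φ a) := by
          apply Tendsto.liminf_eq
          apply (ENNReal.continuous_ofReal.tendsto _).comp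
          have hbb : Tendsto (fun n => b + ε n) atTop (𝓝 b) := by
            simpa using tendsto_const_nhds.add hε0
          exact ((hφ_cont.tendsto b).comp hbb).sub_const _
  have hfin : (∫⁻ s, ENNReal.ofReal (m₀ s)) ≠ ∞ := by
    rw [← ofReal_integral_eq_lintegral_ofReal hm₀_int (Eventually.of_forall hm₀_nonneg)]
    exact ENNReal.ofReal_ne_top
  have hLeb := (IsUnifLocDoublingMeasure.vitaliFamily (volume : Measure ℝ) 1).ae_tendsto_lintegral_div
    (f := fun s => ENNReal.ofReal (m₀ s)) hm₀_meas.ennreal_ofReal.aemeasurable hfin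
  have hA5 : ∀ᵐ t, t ∈ Ico a b →
      ENNReal.ofReal (m₀ t) - ENNReal.ofReal (D t) ≤ ψ t := by
    filter_upwards [hdiff, hD_nonneg, hLeb] with t hdt hDt hLt htmem
    set δ : ℕ → ℝ := fun n => (b - t) / (n + 1) with hδ
    have hbt : 0 < b - t := by linarith [htmem.2]
    have hδpos : ∀ n, 0 < δ n := fun n => by positivity
    have hδle : ∀ n, δ n ≤ b - t := fun n => by
      rw [hδ]
      apply div_le_self hbt.le
      simp
    have hδ0 : Tendsto δ atTop (𝓝 0) := by
      have h1 : Tendsto (fun n : ℕ => (b - t) * (1 / (n + 1))) atTop (𝓝 ((b - t) * 0)) :=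
        tendsto_const_nhds.mul tendsto_one_div_add_atTop_nhds_zero_nat
      simpa [mul_one_div, hδ, div_eq_mul_inv] using h1
    set y : ℕ → ℝ := fun n => t + δ n with hy
    have hy_mem : ∀ n, y n ∈ Ioc t b := fun n =>
      ⟨by simp [hy]; linarith [hδpos n], by simp [hy]; linarith [hδle n]⟩
    have hy_t : Tendsto y atTop (𝓝 t) := by simpa using tendsto_const_nhds.add hδ0
    have hyIoi : Tendsto y atTop (𝓝[>] t) :=
      tendsto_nhdsWithin_of_tendsto_nhds_of_eventually_within _ hy_t
        (Eventually.of_forall fun n => (hy_mem n).1)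
    have hM1 : Tendsto (fun n => (∫⁻ s in Icc t (y n), ENNReal.ofReal (m₀ s))
        / ENNReal.ofReal (y n - t)) atTop (𝓝 (ENNReal.ofReal (m₀ t))) := by
      have h2 := (hLt.comp (Real.tendsto_Icc_vitaliFamily_right t)).comp hyIoi
      refine h2.congr (fun n => ?_)
      show (∫⁻ s in Icc t (y n), ENNReal.ofReal (m₀ s)) / volume (Icc t (y n)) = _
      rw [Real.volume_Icc]
    have hq_nonneg : ∀ n, 0 ≤ (M (y n) - M t) / δ n := fun n =>
      div_nonneg (by linarith [hM_mono ((hy_mem n).1.le : t ≤ y n)]) (hδpos n).le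
    have hMq : ∀ n, (∫⁻ s in Icc t (y n), ENNReal.ofReal (m₀ s)) / ENNReal.ofReal (y n - t)
        = ENNReal.ofReal ((M (y n) - M t) / δ n) := by
      intro n
      have hIcc : ∫⁻ s in Icc t (y n), ENNReal.ofReal (m₀ s)
          = ENNReal.ofReal (M (y n) - M t) := by
        rw [hMdiff t (y n), intervalIntegral.integral_of_le (hy_mem n).1.le,
          ← integral_Icc_eq_integral_Ioc]
        exact (ofReal_integral_eq_lintegral_ofReal hm₀_int.integrableOn
          (Eventually.of_forall (fun s => hm₀_nonneg s))).symm
      have hynt : y n - t = δ n := by rw [hy]; ring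
      rw [hIcc, hynt, ← ENNReal.ofReal_div_of_pos (hδpos n)]
    have hM2 : Tendsto (fun n => (M (y n) - M t) / δ n) atTop (𝓝 (m₀ t)) := by
      have h3 : Tendsto (fun n => ENNReal.ofReal ((M (y n) - M t) / δ n)) atTop
          (𝓝 (ENNReal.ofReal (m₀ t))) := by
        refine hM1.congr (fun n => ?_)
        rw [hMq n]
      have h4 := (ENNReal.tendsto_toReal (by simp : ENNReal.ofReal (m₀ t) ≠ ⊤)).comp h3
      have h5 : ∀ n, ((ENNReal.ofReal ((M (y n) - M t) / δ n)).toReal)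
          = (M (y n) - M t) / δ n := fun n => ENNReal.toReal_ofReal (hq_nonneg n)
      rw [ENNReal.toReal_ofReal (hm₀_nonneg t)] at h4
      exact h4.congr h5
    have hφq : Tendsto (fun n => (φ (y n) - φ t) / δ n) atTop (𝓝 (D t)) := by
      have hs := hasDerivAt_iff_tendsto_slope.1 hdt.hasDerivAt
      have hyne : Tendsto y atTop (𝓝[≠] t) :=
        tendsto_nhdsWithin_of_tendsto_nhds_of_eventually_within _ hy_t
          (Eventually.of_forall fun n => ((hy_mem n).1.ne' : y n ≠ t))
      have h6 := hs.comp hyne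
      refine h6.congr (fun n => ?_)
      show slope φ t (y n) = _
      rw [slope_def_field]
      congr 1
      rw [hy]; ring
    have hgq : Tendsto (fun n => (g (y n) - g t) / δ n) atTop (𝓝 (m₀ t - D t)) := by
      have h7 := hM2.sub hφq
      refine h7.congr (fun n => ?_)
      have : g = fun t => M t - φ t := by funext s; simp [hφ]
      rw [this]
      ring
    have hy_mem01 : ∀ n, y n ∈ Icc (0:ℝ) 1 \ {t} := by
      intro n
      refine ⟨⟨?_, ?_⟩, ?_⟩
      · have h1 := (hy_mem n).1; have h2 := htmem.1; linarith
      · have h1 := (hy_mem n).2; linarith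
      · simp only [mem_singleton_iff]
        exact (hy_mem n).1.ne'
    have hySt : Tendsto y atTop (𝓝[Icc (0:ℝ) 1 \ {t}] t) :=
      tendsto_nhdsWithin_of_tendsto_nhds_of_eventually_within _ hy_t
        (Eventually.of_forall hy_mem01)
    have hbound : ∀ n, ENNReal.ofReal ((g (y n) - g t) / δ n)
        ≤ ENNReal.ofReal (dist (f t) (f (y n)) / |y n - t|) := by
      intro n
      apply ENNReal.ofReal_le_ofReal
      have htmemIcc : t ∈ Icc a b := ⟨htmem.1, htmem.2.le⟩
      have hymemIcc : y n ∈ Icc a b := ⟨htmem.1.trans (hy_mem n).1.le, (hy_mem n).2⟩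
      have h5 : g (y n) - g t ≤ dist (f t) (f (y n)) := by
        rw [hg]
        simp only [hproj_eq (y n) hymemIcc, hproj_eq t htmemIcc]
        have := dist_triangle (f a) (f t) (f (y n))
        linarith
      have habs : |y n - t| = δ n := by
        rw [abs_of_pos (by linarith [(hy_mem n).1] : (0:ℝ) < y n - t), hy]; ring
      rw [habs]
      have hd := hδpos n
      gcongr
    have hlim : Tendsto (fun n => ENNReal.ofReal ((g (y n) - g t) / δ n)) atTop
        (𝓝 (ENNReal.ofReal (m₀ t - D t))) :=
      (ENNReal.continuous_ofReal.tendsto _).comp hgq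
    have hle : ENNReal.ofReal (m₀ t - D t) ≤ ψ t := by
      rw [hψ]
      show ENNReal.ofReal (m₀ t - D t)
        ≤ limsup (fun v : ℝ => ENNReal.ofReal (dist (f t) (f v) / |v - t|))
          (nhdsWithin t (Icc (0:ℝ) 1 \ {t}))
      rw [Filter.limsup_eq]
      refine le_sInf (fun w hw => ?_)
      simp only [Filter.eventually_map, Set.mem_setOf_eq] at hw
      have h8 : ∀ᶠ n in atTop,
          ENNReal.ofReal (dist (f t) (f (y n)) / |y n - t|) ≤ w := hySt.eventually hw
      have h9 : ∀ᶠ n in atTop, ENNReal.ofReal ((g (y n) - g t) / δ n) ≤ w := by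
        filter_upwards [h8] with n hn using le_trans (hbound n) hn
      exact le_of_tendsto hlim h9
    calc ENNReal.ofReal (m₀ t) - ENNReal.ofReal (D t)
        = ENNReal.ofReal (m₀ t - D t) := (ENNReal.ofReal_sub _ hDt).symm
      _ ≤ ψ t := hle
  have hgb : dist (f a) (f b) = M b - M a - (φ b - φ a) := by
    have h1 : g b = dist (f a) (f b) := by rw [hg]; simp [hproj_eq b ⟨hab.le, le_refl b⟩]
    have h2 : g a = 0 := by rw [hg]; simp [hproj_eq a ⟨le_refl a, hab.le⟩]
    have h3 : φ b = M b - g b := rfl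
    have h4 : φ a = M a - g a := rfl
    rw [h3, h4]; linarith
  have hΔ : 0 ≤ φ b - φ a := sub_nonneg.2 (hφ_mono hab.le)
  have hX : M b - M a = ∫ t in Icc a b, m₀ t := by
    rw [hMdiff, intervalIntegral.integral_of_le hab.le, ← integral_Icc_eq_integral_Ioc]
  have hXE : ENNReal.ofReal (∫ t in Icc a b, m₀ t) = ∫⁻ t in Icc a b, ENNReal.ofReal (m₀ t) :=
    ofReal_integral_eq_lintegral_ofReal hm₀_int.integrableOn
      (Eventually.of_forall (fun s => hm₀_nonneg s))
  have hae : ∀ᵐ t ∂(volume.restrict (Icc a b)),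
      ENNReal.ofReal (m₀ t) - ENNReal.ofReal (D t) ≤ ψ t := by
    have h0 : ∀ᵐ t ∂(volume.restrict (Icc a b)), t ∈ Ico a b := by
      rw [ae_iff]
      rw [Measure.restrict_apply' measurableSet_Icc]
      refine measure_mono_null (t := {b}) (fun x hx => ?_) Real.volume_singleton
      obtain ⟨hx1, hx2⟩ := hx
      simp only [mem_setOf_eq, mem_Ico, not_and, not_lt] at hx1
      have : x = b := le_antisymm hx2.2 (hx1 hx2.1)
      simp [this]
    filter_upwards [h0, ae_restrict_of_ae hA5] with t h1 h2 using h2 h1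
  calc ENNReal.ofReal (dist (f a) (f b))
      = ENNReal.ofReal ((M b - M a) - (φ b - φ a)) := by rw [hgb]
    _ = ENNReal.ofReal (M b - M a) - ENNReal.ofReal (φ b - φ a) := ENNReal.ofReal_sub _ hΔ
    _ ≤ ENNReal.ofReal (M b - M a) - ∫⁻ t in Icc a b, ENNReal.ofReal (D t) :=
        tsub_le_tsub_left hA3 _
    _ = (∫⁻ t in Icc a b, ENNReal.ofReal (m₀ t)) - ∫⁻ t in Icc a b, ENNReal.ofReal (D t) := by
        rw [hX, hXE]
    _ ≤ ∫⁻ t in Icc a b, (ENNReal.ofReal (m₀ t) - ENNReal.ofReal (D t)) := by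
        rw [tsub_le_iff_right, ← lintegral_add_right _ hD_meas.ennreal_ofReal]
        exact lintegral_mono (fun t => le_tsub_add)
    _ ≤ ∫⁻ t in Icc a b, ψ t := lintegral_mono_ae hae

private lemma lower_holder {p q : ℝ} (hpq : Real.HolderConjugate p q) (ψ : ℝ → ℝ≥0∞)
    (a b : ℝ) :
    ∫⁻ u in Icc a b, ψ u
      ≤ (∫⁻ u in Icc a b, ψ u ^ p) ^ (1/p) * ENNReal.ofReal (b - a) ^ (1/q) := by
  obtain ⟨G, hGmeas, hGle, hGeq⟩ :=
    exists_measurable_le_lintegral_eq ((volume : Measure ℝ).restrict (Icc a b)) ψ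
  have h1 : ∫⁻ u in Icc a b, G u ≤ (∫⁻ u in Icc a b, G u ^ p) ^ (1/p)
      * (∫⁻ u in Icc a b, (1:ℝ≥0∞) ^ q) ^ (1/q) := by
    have h0 := ENNReal.lintegral_mul_le_Lp_mul_Lq ((volume : Measure ℝ).restrict (Icc a b)) hpq
      hGmeas.aemeasurable aemeasurable_const (f := G) (g := fun _ => 1)
    simpa using h0
  have h2 : (∫⁻ _ in Icc a b, (1:ℝ≥0∞) ^ q) = ENNReal.ofReal (b - a) := by
    simp [Real.volume_Icc]
  have h3 : ∫⁻ u in Icc a b, G u ^ p ≤ ∫⁻ u in Icc a b, ψ u ^ p :=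
    lintegral_mono (fun t => ENNReal.rpow_le_rpow (hGle t) hpq.pos.le)
  calc ∫⁻ u in Icc a b, ψ u = ∫⁻ u in Icc a b, G u := hGeq
    _ ≤ (∫⁻ u in Icc a b, G u ^ p) ^ (1/p) * (∫⁻ u in Icc a b, (1:ℝ≥0∞) ^ q) ^ (1/q) := h1
    _ ≤ (∫⁻ u in Icc a b, ψ u ^ p) ^ (1/p) * ENNReal.ofReal (b - a) ^ (1/q) := by
        rw [h2]
        exact mul_le_mul' (ENNReal.rpow_le_rpow h3 (one_div_nonneg.2 hpq.pos.le)) le_rfl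

/-- pathwise rigidity: an `AC^p` curve whose `p`-energy
`∫_0^1 |f'|^p` equals `d(f(0),f(1))^p` is a constant-speed minimizing geodesic. -/
theorem acp_energy_equality_implies_geodesic {Y : Type*} [MetricSpace Y]
    (p : ℝ) (hp : 1 < p) (f : ℝ → Y) (m : ℝ → ℝ)
    (hm_meas : Measurable m) (hm_nonneg : ∀ r ∈ Icc (0:ℝ) 1, 0 ≤ m r)
    (hm_fin : ∫⁻ r in Icc (0:ℝ) 1, ENNReal.ofReal (m r ^ p) < ⊤)
    (hac : ∀ u v : ℝ, 0 ≤ u → u ≤ v → v ≤ 1 →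
      dist (f u) (f v) ≤ ∫ r in u..v, m r)
    (hgeo : ENNReal.ofReal (dist (f 0) (f 1) ^ p)
      = ∫⁻ u in Icc (0:ℝ) 1,
          (limsup (fun v : ℝ => ENNReal.ofReal (dist (f u) (f v) / |v - u|))
            (nhdsWithin u (Icc (0:ℝ) 1 \ {u}))) ^ p) :
    ∀ u ∈ Icc (0:ℝ) 1, ∀ v ∈ Icc (0:ℝ) 1,
      dist (f u) (f v) = |u - v| * dist (f 0) (f 1) := by
  have hppos : (0:ℝ) < p := by linarith
  have hpne : p ≠ 0 := hppos.ne'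
  have hpq : p.HolderConjugate (Real.conjExponent p) := Real.HolderConjugate.conjExponent hp
  set q := Real.conjExponent p with hqdef
  have hq_inv : 1/q = 1 - 1/p := by
    have h0 := hpq.inv_add_inv_eq_one
    rw [one_div, one_div]
    linarith
  set ψ : ℝ → ℝ≥0∞ := fun t => limsup
      (fun v : ℝ => ENNReal.ofReal (dist (f t) (f v) / |v - t|))
      (nhdsWithin t (Icc (0:ℝ) 1 \ {t})) with hψ
  set L := dist (f 0) (f 1) with hLdef
  -- integrability of m
  have hm_int : IntegrableOn m (Icc (0:ℝ) 1) := by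
    refine ⟨hm_meas.aestronglyMeasurable.restrict, ?_⟩
    rw [hasFiniteIntegral_iff_norm]
    have hle : ∀ᵐ r ∂(volume.restrict (Icc (0:ℝ) 1)),
        ENNReal.ofReal ‖m r‖ ≤ 1 + ENNReal.ofReal (m r ^ p) := by
      filter_upwards [ae_restrict_mem measurableSet_Icc] with r hr
      rw [Real.norm_eq_abs, abs_of_nonneg (hm_nonneg r hr)]
      rcases le_total (m r) 1 with h | h
      · calc ENNReal.ofReal (m r) ≤ 1 := ENNReal.ofReal_le_one.2 h
          _ ≤ 1 + ENNReal.ofReal (m r ^ p) := le_self_add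
      · have h2 : m r ≤ m r ^ p := by
          nth_rewrite 1 [← Real.rpow_one (m r)]
          exact Real.rpow_le_rpow_of_exponent_le h hp.le
        calc ENNReal.ofReal (m r) ≤ ENNReal.ofReal (m r ^ p) := ENNReal.ofReal_le_ofReal h2
          _ ≤ 1 + ENNReal.ofReal (m r ^ p) := le_add_self
    calc ∫⁻ r in Icc (0:ℝ) 1, ENNReal.ofReal ‖m r‖
        ≤ ∫⁻ r in Icc (0:ℝ) 1, (1 + ENNReal.ofReal (m r ^ p)) := lintegral_mono_ae hle
      _ = volume (Icc (0:ℝ) 1) + ∫⁻ r in Icc (0:ℝ) 1, ENNReal.ofReal (m r ^ p) := by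
          rw [lintegral_add_left measurable_const]
          simp
      _ < ⊤ := by
          rw [Real.volume_Icc]
          exact ENNReal.add_lt_top.2 ⟨ENNReal.ofReal_lt_top, hm_fin⟩
  -- distance bound per subinterval
  have hB : ∀ a' b' : ℝ, 0 ≤ a' → a' ≤ b' → b' ≤ 1 →
      ENNReal.ofReal (dist (f a') (f b'))
        ≤ (∫⁻ t in Icc a' b', ψ t ^ p) ^ (1/p) * ENNReal.ofReal (b' - a') ^ (1/q) := by
    intro a' b' h1 h2 h3
    calc ENNReal.ofReal (dist (f a') (f b')) ≤ ∫⁻ t in Icc a' b', ψ t :=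
          lemA f m hm_meas hm_nonneg hm_int hac h1 h2 h3
      _ ≤ _ := lower_holder hpq ψ a' b'
  set E : Set ℝ → ℝ≥0∞ := fun s => ∫⁻ t in s, ψ t ^ p with hEdef
  have hE_total : E (Icc (0:ℝ) 1) = ENNReal.ofReal (L ^ p) := hgeo.symm
  have hE_mono : ∀ s : Set ℝ, s ⊆ Icc (0:ℝ) 1 → E s ≤ E (Icc (0:ℝ) 1) := by
    intro s hs
    exact lintegral_mono' (Measure.restrict_mono hs le_rfl) le_rfl
  have hE_fin : ∀ s : Set ℝ, s ⊆ Icc (0:ℝ) 1 → E s ≠ ⊤ := by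
    intro s hs
    exact ne_top_of_le_ne_top (by rw [hE_total]; exact ENNReal.ofReal_ne_top) (hE_mono s hs)
  suffices H : ∀ u v : ℝ, 0 ≤ u → u ≤ v → v ≤ 1 → dist (f u) (f v) = (v - u) * L by
    intro u hu v hv
    rcases le_total u v with h | h
    · rw [abs_of_nonpos (by linarith : u - v ≤ 0), H u v hu.1 h hv.2]
      ring
    · rw [dist_comm, abs_of_nonneg (by linarith : 0 ≤ u - v), H v u hv.1 h hu.2]
  intro u v hu huv hv1
  have hadd : E (Icc 0 u) + E (Icc u v) + E (Icc v 1) = E (Icc (0:ℝ) 1) := by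
    have hIccIoc : ∀ a' b' : ℝ, E (Icc a' b') = E (Ioc a' b') := by
      intro a' b'
      exact setLIntegral_congr (Ioc_ae_eq_Icc).symm
    rw [hIccIoc 0 u, hIccIoc u v, hIccIoc v 1, hIccIoc 0 1, hEdef]
    simp only []
    rw [← lintegral_union measurableSet_Ioc (Set.Ioc_disjoint_Ioc_of_le le_rfl),
      Ioc_union_Ioc_eq_Ioc hu huv,
      ← lintegral_union measurableSet_Ioc (Set.Ioc_disjoint_Ioc_of_le le_rfl),
      Ioc_union_Ioc_eq_Ioc (hu.trans huv) hv1]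
  by_cases hL0 : L = 0
  · have hE01 : E (Icc (0:ℝ) 1) = 0 := by
      rw [hE_total, hL0, Real.zero_rpow hpne, ENNReal.ofReal_zero]
    have hE0 : E (Icc u v) = 0 :=
      le_antisymm (hE01 ▸ hE_mono _ (Icc_subset_Icc hu hv1)) zero_le
    have hd := hB u v hu huv hv1
    rw [show (∫⁻ t in Icc u v, ψ t ^ p) = E (Icc u v) from rfl, hE0,
      ENNReal.zero_rpow_of_pos (by positivity), zero_mul] at hd
    have hd0 : dist (f u) (f v) ≤ 0 := by
      have := le_antisymm hd zero_le
      exact ENNReal.ofReal_eq_zero.1 this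
    rw [hL0, mul_zero]
    linarith [dist_nonneg (x := f u) (y := f v)]
  · have hLpos : 0 < L := lt_of_le_of_ne dist_nonneg (Ne.symm hL0)
    have hLp_pos : (0:ℝ) < L ^ p := Real.rpow_pos_of_pos hLpos _
    have hA : (0:ℝ) < L ^ (p-1) := Real.rpow_pos_of_pos hLpos _
    have hLp : L ^ p = L ^ (p-1) * L := by
      rw [← Real.rpow_add_one hLpos.ne' (p-1), sub_add_cancel]
    set e₁ := (E (Icc 0 u)).toReal with he₁
    set e₂ := (E (Icc u v)).toReal with he₂
    set e₃ := (E (Icc v 1)).toReal with he₃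
    have hf₁ : E (Icc 0 u) ≠ ⊤ := hE_fin _ (Icc_subset_Icc le_rfl (huv.trans hv1))
    have hf₂ : E (Icc u v) ≠ ⊤ := hE_fin _ (Icc_subset_Icc hu hv1)
    have hf₃ : E (Icc v 1) ≠ ⊤ := hE_fin _ (Icc_subset_Icc (hu.trans huv) le_rfl)
    have he_sum : e₁ + e₂ + e₃ = L ^ p := by
      have h1 : (E (Icc 0 u) + E (Icc u v) + E (Icc v 1)).toReal
          = (E (Icc (0:ℝ) 1)).toReal := by rw [hadd]
      rw [ENNReal.toReal_add (ENNReal.add_ne_top.2 ⟨hf₁, hf₂⟩) hf₃,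
        ENNReal.toReal_add hf₁ hf₂, hE_total,
        ENNReal.toReal_ofReal (Real.rpow_nonneg hLpos.le p)] at h1
      exact h1
    have he₁0 : 0 ≤ e₁ := ENNReal.toReal_nonneg
    have he₂0 : 0 ≤ e₂ := ENNReal.toReal_nonneg
    have he₃0 : 0 ≤ e₃ := ENNReal.toReal_nonneg
    have hreal : ∀ a' b' : ℝ, 0 ≤ a' → a' ≤ b' → b' ≤ 1 →
        dist (f a') (f b') ≤ (b' - a') ^ (1 - 1/p) * (E (Icc a' b')).toReal ^ (1/p) := by
      intro a' b' h1 h2 h3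
      have hfin' : E (Icc a' b') ≠ ⊤ := hE_fin _ (Icc_subset_Icc h1 h3)
      have hENN := hB a' b' h1 h2 h3
      have hRHS_fin : (∫⁻ t in Icc a' b', ψ t ^ p) ^ (1/p)
          * ENNReal.ofReal (b' - a') ^ (1/q) ≠ ⊤ := by
        apply ENNReal.mul_ne_top
        · exact ENNReal.rpow_ne_top_of_nonneg (one_div_nonneg.2 hppos.le) hfin'
        · exact ENNReal.rpow_ne_top_of_nonneg (one_div_nonneg.2 hpq.symm.pos.le)
            ENNReal.ofReal_ne_top
      have hmono := ENNReal.toReal_mono hRHS_fin hENN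
      rw [ENNReal.toReal_ofReal dist_nonneg, ENNReal.toReal_mul,
        ← ENNReal.toReal_rpow, ← ENNReal.toReal_rpow,
        ENNReal.toReal_ofReal (by linarith : (0:ℝ) ≤ b' - a'), hq_inv] at hmono
      calc dist (f a') (f b')
          ≤ (E (Icc a' b')).toReal ^ (1/p) * (b' - a') ^ (1 - 1/p) := hmono
        _ = (b' - a') ^ (1 - 1/p) * (E (Icc a' b')).toReal ^ (1/p) := mul_comm _ _
    have htri : L ≤ dist (f 0) (f u) + dist (f u) (f v) + dist (f v) (f 1) := by
      calc L = dist (f 0) (f 1) := rfl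
        _ ≤ dist (f 0) (f v) + dist (f v) (f 1) := dist_triangle _ _ _
        _ ≤ dist (f 0) (f u) + dist (f u) (f v) + dist (f v) (f 1) :=
            add_le_add_left (dist_triangle _ _ _) _
    -- Young upper bounds
    have hY₁ : dist (f 0) (f u) ≤ (e₁ / L^(p-1) + (u - 0)*L*(p-1))/p := by
      calc dist (f 0) (f u) ≤ (u - 0) ^ (1 - 1/p) * e₁ ^ (1/p) := hreal 0 u le_rfl hu (huv.trans hv1)
        _ ≤ _ := young_bound hp (by linarith) he₁0 hLpos
    have hY₂b : dist (f u) (f v) ≤ (v - u) ^ (1 - 1/p) * e₂ ^ (1/p) :=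
      hreal u v hu huv hv1
    have hY₂ : (v - u) ^ (1 - 1/p) * e₂ ^ (1/p) ≤ (e₂ / L^(p-1) + (v - u)*L*(p-1))/p :=
      young_bound hp (by linarith) he₂0 hLpos
    have hY₃ : dist (f v) (f 1) ≤ (e₃ / L^(p-1) + (1 - v)*L*(p-1))/p := by
      calc dist (f v) (f 1) ≤ (1 - v) ^ (1 - 1/p) * e₃ ^ (1/p) :=
            hreal v 1 (hu.trans huv) hv1 le_rfl
        _ ≤ _ := young_bound hp (by linarith) he₃0 hLpos
    have hsumY : (e₁ / L^(p-1) + (u - 0)*L*(p-1))/p + (e₂ / L^(p-1) + (v - u)*L*(p-1))/p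
        + (e₃ / L^(p-1) + (1 - v)*L*(p-1))/p = L := by
      have hsum_div : e₁/L^(p-1) + e₂/L^(p-1) + e₃/L^(p-1) = L := by
        rw [← add_div, ← add_div, he_sum, hLp]
        field_simp
      field_simp at hsum_div ⊢
      linarith [hsum_div]
    have hd2_ge : (e₂ / L^(p-1) + (v - u)*L*(p-1))/p ≤ dist (f u) (f v) := by linarith
    rcases eq_or_lt_of_le huv with rfl | huv'
    · simp
    · have ht2 : 0 < v - u := by linarith
      have hBY : (v - u) ^ (1 - 1/p) * e₂ ^ (1/p) = (e₂ / L^(p-1) + (v - u)*L*(p-1))/p :=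
        le_antisymm hY₂ (le_trans hd2_ge hY₂b)
      have he2val : e₂ = (v - u) * L ^ p := young_eq hp ht2 he₂0 hLpos hBY
      have hd2 : dist (f u) (f v) = (e₂ / L^(p-1) + (v - u)*L*(p-1))/p :=
        le_antisymm (hBY ▸ hY₂b) hd2_ge
      rw [hd2, he2val, hLp]
      field_simp
      ring
end

section
/- Let (Y,d) be a metric space and p ∈ (1,∞). Let (y_n)_{n≥0} be a sequence in Y and y_∞ ∈ Y with y_n → y_∞. Let (b_n)_{n≥1} be strictly positive reals with Σ_{n=1}^∞ b_n = 1 and Σ_{n=1}^∞ d(y_{n−1}, y_n)^p / b_n^{p−1} < ∞, and set u_0 = 0 and u_n = Σ_{i=1}^n b_i. Suppose for each n ≥ 1 there is a curve γ_n : [0,1] → Y with γ_n(0) = y_{n−1}, γ_n(1) = y_n, and d(γ_n(s), γ_n(t)) = |s − t| · d(y_{n−1}, y_n) for all s,t ∈ [0,1]. Define γ : [0,1] → Y by γ(u) = γ_n((u − u_{n−1})/b_n) for u ∈ [u_{n−1}, u_n), n ≥ 1, and γ(1) = y_∞. Then γ ∈ AC^p(Y): explicitly, the function m : [0,1] → [0,∞)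 given by m(u) = d(y_{n−1}, y_n)/b_n for u ∈ [u_{n−1}, u_n) (and m(1) = 0) satisfies ∫_0^1 m(r)^p dr = Σ_{n=1}^∞ d(y_{n−1}, y_n)^p / b_n^{p−1} < ∞ and d(γ(u), γ(v)) ≤ ∫_u^v m(r) dr for all 0 ≤ u ≤ v ≤ 1. -/
open MeasureTheory Set Filter
open scoped ENNReal

/-- concatenating constant-speed geodesics between the points of a
convergent sequence of finite weighted `p`-variation (on intervals `[u n, u (n+1))` of
lengths `b n`) yields a curve `γ ∈ AC^p(Y)`, with explicit witness `m` whose `p`-energy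
equals `Σ d(y_n, y_{n+1})^p / b_n^{p-1}`. -/
theorem concatenated_geodesics_acp {Y : Type*} [MetricSpace Y]
    (p : ℝ) (hp : 1 < p)
    (y : ℕ → Y) (yinf : Y) (hconv : Tendsto y atTop (nhds yinf))
    (b : ℕ → ℝ) (hb : ∀ n, 0 < b n) (hbsum : HasSum b 1)
    (hvar : Summable fun n => dist (y n) (y (n + 1)) ^ p / b n ^ (p - 1))
    (u : ℕ → ℝ) (hu0 : u 0 = 0) (hurec : ∀ n, u (n + 1) = u n + b n)
    (γc : ℕ → ℝ → Y)
    (hγc0 : ∀ n, γc n 0 = y n) (hγc1 : ∀ n, γc n 1 = y (n + 1))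
    (hγcspeed : ∀ n, ∀ s ∈ Icc (0:ℝ) 1, ∀ t ∈ Icc (0:ℝ) 1,
      dist (γc n s) (γc n t) = |s - t| * dist (y n) (y (n + 1)))
    (γ : ℝ → Y) (m : ℝ → ℝ)
    (hγ : ∀ n, ∀ v : ℝ, u n ≤ v → v < u (n + 1) → γ v = γc n ((v - u n) / b n))
    (hγ1 : γ 1 = yinf)
    (hm : ∀ n, ∀ v : ℝ, u n ≤ v → v < u (n + 1) → m v = dist (y n) (y (n + 1)) / b n)
    (hm1 : m 1 = 0) :
    (∫⁻ r in Icc (0:ℝ) 1, ENNReal.ofReal (m r ^ p))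
        = ENNReal.ofReal (∑' n, dist (y n) (y (n + 1)) ^ p / b n ^ (p - 1)) ∧
    ∀ a c : ℝ, 0 ≤ a → a ≤ c → c ≤ 1 → dist (γ a) (γ c) ≤ ∫ r in a..c, m r := by
  classical
  have hdnn : ∀ n, (0:ℝ) ≤ dist (y n) (y (n + 1)) := fun n => dist_nonneg
  have humono : StrictMono u :=
    strictMono_nat_of_lt_succ (fun n => by rw [hurec]; linarith [hb n])
  have husum : ∀ n, u n = ∑ i ∈ Finset.range n, b i := by
    intro n; induction n with
    | zero => simpa using hu0
    | succ n ih => rw [hurec, ih, Finset.sum_range_succ]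
  have hutend : Tendsto u atTop (nhds 1) :=
    hbsum.tendsto_sum_nat.congr (fun n => (husum n).symm)
  have hu_nonneg : ∀ n, 0 ≤ u n := fun n => by
    rw [← hu0]; exact humono.monotone (Nat.zero_le n)
  have hu_le_one : ∀ n, u n ≤ 1 := humono.monotone.ge_of_tendsto hutend
  -- every point of [0,1) lies in a unique piece
  have hpiece : ∀ v : ℝ, 0 ≤ v → v < 1 → ∃ n, u n ≤ v ∧ v < u (n + 1) := by
    intro v hv0 hv1
    have hex : ∃ N, v < u N := (hutend.eventually (eventually_gt_nhds hv1)).exists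
    have hfind : Nat.find hex ≠ 0 := by
      intro h
      have := Nat.find_spec hex
      rw [h, hu0] at this; linarith
    obtain ⟨n, hn⟩ := Nat.exists_eq_succ_of_ne_zero hfind
    refine ⟨n, ?_, ?_⟩
    · by_contra h
      exact Nat.find_min hex (by omega) (lt_of_not_ge h)
    · have := Nat.find_spec hex
      rwa [hn] at this
  have hmem : ∀ n, ∀ v : ℝ, u n ≤ v → v < u (n + 1) → (v - u n) / b n ∈ Icc (0:ℝ) 1 := by
    intro n v h1 h2
    rw [hurec] at h2
    constructor
    · exact div_nonneg (by linarith) (hb n).le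
    · rw [div_le_one (hb n)]; linarith
  have hγu : ∀ n, γ (u n) = y n := by
    intro n
    rw [hγ n (u n) le_rfl (humono (Nat.lt_succ_self n))]
    simp [hγc0 n]
  have hdistloc : ∀ n, ∀ v w : ℝ, u n ≤ v → v ≤ w → w < u (n + 1) →
      dist (γ v) (γ w) = (w - v) * (dist (y n) (y (n + 1)) / b n) := by
    intro n v w h1 h2 h3
    rw [hγ n v h1 (lt_of_le_of_lt h2 h3), hγ n w (h1.trans h2) h3,
      hγcspeed n _ (hmem n v h1 (lt_of_le_of_lt h2 h3)) _ (hmem n w (h1.trans h2) h3)]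
    have he : (v - u n) / b n - (w - u n) / b n = -((w - v) / b n) := by ring
    rw [he, abs_neg, abs_of_nonneg (div_nonneg (by linarith) (hb n).le)]
    ring
  have hdistend : ∀ n, ∀ v : ℝ, u n ≤ v → v < u (n + 1) →
      dist (γ v) (y (n + 1)) = (u (n + 1) - v) * (dist (y n) (y (n + 1)) / b n) := by
    intro n v h1 h2
    conv_lhs => rw [hγ n v h1 h2, ← hγc1 n]
    rw [hγcspeed n _ (hmem n v h1 h2) 1 (by norm_num)]
    have he : (v - u n) / b n - 1 = -((u (n + 1) - v) / b n) := by
      have hbne : b n ≠ 0 := (hb n).ne'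
      rw [hurec]; field_simp; ring
    rw [he, abs_neg, abs_of_nonneg (div_nonneg (by linarith) (hb n).le)]
    ring
  have hintloc : ∀ n, ∀ v w : ℝ, u n ≤ v → v ≤ w → w ≤ u (n + 1) →
      (∫ r in v..w, m r) = (w - v) * (dist (y n) (y (n + 1)) / b n) := by
    intro n v w h1 h2 h3
    rw [intervalIntegral.integral_of_le h2, MeasureTheory.integral_Ioc_eq_integral_Ioo,
      setIntegral_congr_fun measurableSet_Ioo
        (g := fun _ => dist (y n) (y (n + 1)) / b n)
        (fun x hx => hm n x (h1.trans hx.1.le) (lt_of_lt_of_le hx.2 h3)),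
      setIntegral_const, Real.volume_real_Ioo_of_le h2, smul_eq_mul]
  -- decomposition of the measure
  have hcover : Ico (0:ℝ) 1 = ⋃ n, Ico (u n) (u (n + 1)) := by
    ext v
    simp only [mem_Ico, mem_iUnion]
    constructor
    · rintro ⟨h0, h1⟩; exact hpiece v h0 h1
    · rintro ⟨n, h1, h2⟩
      exact ⟨(hu_nonneg n).trans h1, lt_of_lt_of_le h2 (hu_le_one (n + 1))⟩
  have hdisj : Pairwise (Function.onFun Disjoint fun n => Ico (u n) (u (n + 1))) := by
    intro i j hij
    rcases hij.lt_or_gt with h | h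
    · exact Set.Ico_disjoint_Ico.mpr
        (le_trans (min_le_left _ _) (le_trans (humono.monotone h) (le_max_right _ _)))
    · exact Set.Ico_disjoint_Ico.mpr
        (le_trans (min_le_right _ _) (le_trans (humono.monotone h) (le_max_left _ _)))
  have hrestrict : volume.restrict (Icc (0:ℝ) 1)
      = Measure.sum (fun n => volume.restrict (Ico (u n) (u (n + 1)))) := by
    rw [← Measure.restrict_congr_set Ico_ae_eq_Icc, hcover,
      Measure.restrict_iUnion hdisj (fun n => measurableSet_Ico)]
  have hkey : ∀ (g : ℝ → ℝ≥0∞) (cst : ℕ → ℝ≥0∞),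
      (∀ n, ∀ v : ℝ, u n ≤ v → v < u (n + 1) → g v = cst n) →
      (∫⁻ r in Icc (0:ℝ) 1, g r) = ∑' n, cst n * ENNReal.ofReal (b n) := by
    intro g cst hg
    rw [hrestrict, lintegral_sum_measure]
    refine tsum_congr fun n => ?_
    rw [setLIntegral_congr_fun measurableSet_Ico
        (fun v hv => hg n v hv.1 hv.2),
      setLIntegral_const, Real.volume_Ico, hurec, add_sub_cancel_left]
  -- part 1
  have hpart1 : (∫⁻ r in Icc (0:ℝ) 1, ENNReal.ofReal (m r ^ p))
      = ENNReal.ofReal (∑' n, dist (y n) (y (n + 1)) ^ p / b n ^ (p - 1)) := by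
    rw [hkey (fun r => ENNReal.ofReal (m r ^ p))
        (fun n => ENNReal.ofReal ((dist (y n) (y (n + 1)) / b n) ^ p))
        (fun n v h1 h2 => by simp only [hm n v h1 h2]),
      ENNReal.ofReal_tsum_of_nonneg
        (fun n => div_nonneg (Real.rpow_nonneg (hdnn n) p) (Real.rpow_nonneg (hb n).le _)) hvar]
    refine tsum_congr fun n => ?_
    rw [← ENNReal.ofReal_mul (Real.rpow_nonneg (div_nonneg (hdnn n) (hb n).le) p)]
    congr 1
    rw [Real.div_rpow (hdnn n) (hb n).le, Real.rpow_sub (hb n), Real.rpow_one]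
    have hbp : (b n) ^ p ≠ 0 := (Real.rpow_pos_of_pos (hb n) p).ne'
    field_simp
  -- summability of the distances
  have hdsum : Summable (fun n => dist (y n) (y (n + 1))) := by
    refine Summable.of_nonneg_of_le hdnn (fun n => ?_) (hbsum.summable.add hvar)
    have he_nn : (0:ℝ) ≤ dist (y n) (y (n + 1)) ^ p / b n ^ (p - 1) :=
      div_nonneg (Real.rpow_nonneg (hdnn n) p) (Real.rpow_nonneg (hb n).le _)
    by_cases h : dist (y n) (y (n + 1)) ≤ b n
    · linarith
    · push_neg at h
      have hd0 : 0 < dist (y n) (y (n + 1)) := (hb n).trans h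
      have hone : (1:ℝ) ≤ (dist (y n) (y (n + 1)) / b n) ^ (p - 1) := by
        have h1 : (1:ℝ) ≤ dist (y n) (y (n + 1)) / b n := by
          rw [le_div_iff₀ (hb n)]; linarith
        calc (1:ℝ) = 1 ^ (p - 1) := (Real.one_rpow _).symm
          _ ≤ (dist (y n) (y (n + 1)) / b n) ^ (p - 1) :=
            Real.rpow_le_rpow (by norm_num) h1 (by linarith)
      have hkey2 : dist (y n) (y (n + 1)) ^ p / b n ^ (p - 1)
          = dist (y n) (y (n + 1)) * (dist (y n) (y (n + 1)) / b n) ^ (p - 1) := by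
        rw [Real.div_rpow hd0.le (hb n).le]
        have : dist (y n) (y (n + 1)) ^ p = dist (y n) (y (n + 1)) ^ (1 + (p - 1)) := by
          norm_num
        rw [this, Real.rpow_add hd0, Real.rpow_one, mul_div_assoc]
      have : dist (y n) (y (n + 1)) ≤ dist (y n) (y (n + 1)) ^ p / b n ^ (p - 1) := by
        rw [hkey2]
        exact le_mul_of_one_le_right hd0.le hone
      linarith [(hb n).le]
  -- integrability of m on [0,1]
  have haem : AEMeasurable m (volume.restrict (Icc (0:ℝ) 1)) := by
    rw [hrestrict, aemeasurable_sum_measure_iff]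
    intro n
    refine (aemeasurable_const (b := dist (y n) (y (n + 1)) / b n)).congr ?_
    filter_upwards [ae_restrict_mem measurableSet_Ico] with v hv
    exact (hm n v hv.1 hv.2).symm
  have hmnonnegIcc : ∀ v ∈ Icc (0:ℝ) 1, 0 ≤ m v := by
    intro v hv
    rcases eq_or_lt_of_le hv.2 with h | h
    · rw [h, hm1]
    · obtain ⟨n, h1, h2⟩ := hpiece v hv.1 h
      rw [hm n v h1 h2]
      exact div_nonneg (hdnn n) (hb n).le
  have hfin : (∫⁻ r in Icc (0:ℝ) 1, ENNReal.ofReal (m r))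
      = ENNReal.ofReal (∑' n, dist (y n) (y (n + 1))) := by
    rw [hkey _ (fun n => ENNReal.ofReal (dist (y n) (y (n + 1)) / b n))
        (fun n v h1 h2 => by simp only [hm n v h1 h2]),
      ENNReal.ofReal_tsum_of_nonneg hdnn hdsum]
    refine tsum_congr fun n => ?_
    rw [← ENNReal.ofReal_mul (div_nonneg (hdnn n) (hb n).le), div_mul_cancel₀ _ (hb n).ne']
  have hm_int : IntegrableOn m (Icc (0:ℝ) 1) volume := by
    refine ⟨haem.aestronglyMeasurable, ?_⟩
    rw [hasFiniteIntegral_iff_ofReal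
      ((ae_restrict_iff' measurableSet_Icc).mpr (ae_of_all _ hmnonnegIcc)), hfin]
    exact ENNReal.ofReal_lt_top
  have hii : ∀ x z : ℝ, 0 ≤ x → x ≤ z → z ≤ 1 → IntervalIntegrable m volume x z := by
    intro x z hx hxz hz
    have h : IntegrableOn m (uIcc x z) volume := by
      rw [uIcc_of_le hxz]; exact hm_int.mono_set (Icc_subset_Icc hx hz)
    exact h.intervalIntegrable
  have hint_nonneg : ∀ x z : ℝ, 0 ≤ x → x ≤ z → z ≤ 1 → 0 ≤ ∫ r in x..z, m r :=
    fun x z hx hxz hz => intervalIntegral.integral_nonneg hxz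
      (fun r hr => hmnonnegIcc r ⟨hx.trans hr.1, hr.2.trans hz⟩)
  -- telescoping claim
  have hclaim : ∀ k, ∀ v : ℝ, u k ≤ v → v < u (k + 1) → ∀ N, k + 1 ≤ N →
      dist (γ v) (y N) ≤ ∫ r in v..(u N), m r := by
    intro k v h1 h2 N hN
    have hv0 : 0 ≤ v := (hu_nonneg k).trans h1
    induction N, hN using Nat.le_induction with
    | base =>
      rw [hdistend k v h1 h2, ← hintloc k v (u (k + 1)) h1 h2.le le_rfl]
    | succ N hN ih =>
      have hvuN : v ≤ u N := le_of_lt (lt_of_lt_of_le h2 (humono.monotone hN))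
      calc dist (γ v) (y (N + 1))
          ≤ dist (γ v) (y N) + dist (y N) (y (N + 1)) := dist_triangle _ _ _
        _ ≤ (∫ r in v..(u N), m r) + ∫ r in (u N)..(u (N + 1)), m r := by
            refine add_le_add ih (le_of_eq ?_)
            rw [hintloc N (u N) (u (N + 1)) le_rfl (humono (Nat.lt_succ_self N)).le le_rfl,
              hurec, add_sub_cancel_left, mul_div_cancel₀ _ (hb N).ne']
        _ = ∫ r in v..(u (N + 1)), m r :=
            intervalIntegral.integral_add_adjacent_intervals
              (hii v (u N) hv0 hvuN (hu_le_one N))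
              (hii (u N) (u (N + 1)) (hu_nonneg N) (humono (Nat.lt_succ_self N)).le
                (hu_le_one _))
  refine ⟨hpart1, ?_⟩
  intro a c ha hac hc
  rcases eq_or_lt_of_le hac with rfl | hlt
  · simp
  rcases eq_or_lt_of_le hc with h | hc1
  · -- c = 1
    subst h
    obtain ⟨k, hk1, hk2⟩ := hpiece a ha hlt
    rw [hγ1]
    have htend : Tendsto (fun N => dist (γ a) (y N)) atTop (nhds (dist (γ a) yinf)) :=
      tendsto_const_nhds.dist hconv
    refine le_of_tendsto htend ?_
    filter_upwards [eventually_ge_atTop (k + 1)] with N hN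
    have hauN : a ≤ u N := le_of_lt (lt_of_lt_of_le hk2 (humono.monotone hN))
    have h2 := hint_nonneg (u N) 1 (hu_nonneg N) (hu_le_one N) le_rfl
    have h3 := intervalIntegral.integral_add_adjacent_intervals
      (hii a (u N) ha hauN (hu_le_one N)) (hii (u N) 1 (hu_nonneg N) (hu_le_one N) le_rfl)
    have h4 := hclaim k a hk1 hk2 N hN
    linarith
  · -- c < 1
    obtain ⟨k, hk1, hk2⟩ := hpiece a ha (hlt.trans hc1)
    obtain ⟨l, hl1, hl2⟩ := hpiece c (ha.trans hac) hc1
    by_cases hcase : c < u (k + 1)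
    · exact le_of_eq ((hdistloc k a c hk1 hac hcase).trans
        (hintloc k a c hk1 hac hcase.le).symm)
    · push_neg at hcase
      have hkl : k + 1 ≤ l := by
        by_contra h
        push_neg at h
        have : u (l + 1) ≤ u (k + 1) := humono.monotone (by omega)
        linarith
      have ha_le_ul : a ≤ u l := le_of_lt (lt_of_lt_of_le hk2 (humono.monotone hkl))
      calc dist (γ a) (γ c)
          ≤ dist (γ a) (y l) + dist (y l) (γ c) := dist_triangle _ _ _
        _ ≤ (∫ r in a..(u l), m r) + ∫ r in (u l)..c, m r := by
            refine add_le_add (hclaim k a hk1 hk2 l hkl) (le_of_eq ?_)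
            rw [← hγu l, hdistloc l (u l) c le_rfl hl1 hl2,
              hintloc l (u l) c le_rfl hl1 hl2.le]
        _ = ∫ r in a..c, m r :=
            intervalIntegral.integral_add_adjacent_intervals
              (hii a (u l) ha ha_le_ul (hu_le_one l))
              (hii (u l) c (hu_nonneg l) hl1 hc1.le)
end

section
/- Let (X,d) be a metric space, p ∈ [1,∞), N ∈ ℕ with N ≥ 1, and let σ : [0,1] → X be the piecewise-constant function built from points x_0,…,x_{2^N} ∈ X. Then for every integer k with 1 ≤ k ≤ 2^N − 1 and every h ∈ [k/2^N, (k+1)/2^N) with h < 1, it holds ∫_0^{1−h} d(σ(u+h),σ(u))^p du ≤ h · ((k+1)^p / k) · Σ_{j=0}^{2^N−1} d(x_{j+1}, x_j)^p. -/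
open MeasureTheory Set Filter
open scoped ENNReal

/-- inequality (6.7): large-shift estimate with constant
`h (k+1)^p / k` for the piecewise-constant interpolation `σ` built from points
`x 0, …, x (2^N)` on the dyadic grid of mesh `2^{-N}`. -/
theorem piecewise_constant_large_shift' {X : Type*} [MetricSpace X]
    (p : ℝ) (hp : 1 ≤ p) (N : ℕ) (hN : 1 ≤ N) (x : ℕ → X) (σ : ℝ → X)
    (hσ : ∀ i : ℕ, i < 2 ^ N → ∀ u : ℝ,
      (i : ℝ) / 2 ^ N ≤ u → u < ((i : ℝ) + 1) / 2 ^ N → σ u = x i)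
    (hσ1 : σ 1 = x (2 ^ N)) :
    ∀ k : ℕ, 1 ≤ k → k ≤ 2 ^ N - 1 →
      ∀ h : ℝ, (k : ℝ) / 2 ^ N ≤ h → h < ((k : ℝ) + 1) / 2 ^ N → h < 1 →
        ∫⁻ u in Icc (0:ℝ) (1 - h), ENNReal.ofReal (dist (σ (u + h)) (σ u) ^ p)
          ≤ ENNReal.ofReal
              (h * (((k : ℝ) + 1) ^ p / (k : ℝ)) *
                ∑ j ∈ Finset.range (2 ^ N), dist (x (j + 1)) (x j) ^ p) := by
  intro k hk1 hk2 h hh1 hh2 hh3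
  have hT : (0:ℝ) < 2 ^ N := by positivity
  set M := 2 ^ N with hM
  have hMC : ((M:ℕ):ℝ) = (2:ℝ)^N := by rw [hM]; push_cast; ring
  have hk0 : (0:ℝ) < (k:ℝ) := by exact_mod_cast hk1
  set d : ℕ → ℝ := fun j => dist (x (j+1)) (x j) ^ p with hd
  have hd0 : ∀ j, 0 ≤ d j := fun j => Real.rpow_nonneg dist_nonneg p
  set S : ℝ := ∑ j ∈ Finset.range M, d j with hSdef
  have hS0 : 0 ≤ S := Finset.sum_nonneg fun j _ => hd0 j
  set C : ℝ := ((k:ℝ)+1) ^ (p-1) with hCdef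
  have hC0 : 0 ≤ C := Real.rpow_nonneg (by positivity) _
  set W : ℕ → ℝ := fun i => ∑ j ∈ Finset.Ico i (min (i+k+1) M), d j with hWdef
  have hW0 : ∀ i, 0 ≤ W i := fun i => Finset.sum_nonneg fun j _ => hd0 j
  have hh0 : 0 < h := lt_of_lt_of_le (by positivity) hh1
  set B : ℕ → Set ℝ := fun i =>
    Ico ((i:ℝ)/2^N) (((i:ℝ)+1)/2^N) ∩ Icc 0 (1-h) with hBdef
  -- pointwise bound on each block
  have key : ∀ i : ℕ, i < M → ∀ u ∈ B i,
      dist (σ (u + h)) (σ u) ^ p ≤ C * W i := by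
    intro i hiM u hu
    simp only [hBdef, mem_inter_iff, mem_Ico, mem_Icc] at hu
    obtain ⟨⟨hu1, hu2⟩, hu3, hu4⟩ := hu
    have hσu : σ u = x i := hσ i hiM u hu1 hu2
    have huh1 : u + h ≤ 1 := by linarith
    obtain ⟨m, hσm, him, hmk, hmM⟩ :
        ∃ m : ℕ, σ (u + h) = x m ∧ i ≤ m ∧ m ≤ i + k + 1 ∧ m ≤ M := by
      rcases eq_or_lt_of_le huh1 with heq | hlt
      · refine ⟨M, by rw [heq]; exact hσ1, by omega, ?_, le_rfl⟩
        have h1 : (1:ℝ) < ((i:ℝ)+(k:ℝ)+2)/2^N := by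
          have h2 := add_lt_add hu2 hh2
          rw [heq] at h2
          calc (1:ℝ) < ((i:ℝ)+1)/2^N + ((k:ℝ)+1)/2^N := h2
            _ = ((i:ℝ)+(k:ℝ)+2)/2^N := by ring
        have h2 : (2:ℝ)^N < (i:ℝ)+(k:ℝ)+2 := by rwa [lt_div_iff₀ hT, one_mul] at h1
        have h3 : ((M:ℕ):ℝ) < ((i+k+2 : ℕ):ℝ) := by rw [hMC]; push_cast; linarith
        have h4 : M < i+k+2 := by exact_mod_cast h3
        omega
      · have hlow : ((i:ℝ)+(k:ℝ))/2^N ≤ u + h := by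
          calc ((i:ℝ)+(k:ℝ))/2^N = (i:ℝ)/2^N + (k:ℝ)/2^N := by ring
            _ ≤ u + h := add_le_add hu1 hh1
        by_cases hcase : u + h < ((i:ℝ)+(k:ℝ)+1)/2^N
        · have hik : i + k < M := by
            have h1 : ((i:ℝ)+(k:ℝ))/2^N < 1 := lt_of_le_of_lt hlow hlt
            rw [div_lt_one hT] at h1
            have h3 : ((i+k : ℕ):ℝ) < ((M:ℕ):ℝ) := by rw [hMC]; push_cast; linarith
            exact_mod_cast h3
          refine ⟨i + k, ?_, by omega, by omega, by omega⟩
          exact hσ (i+k) hik (u+h) (by push_cast; exact hlow) (by push_cast; exact hcase)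
        · push_neg at hcase
          have hhigh : u + h < ((i:ℝ)+(k:ℝ)+1+1)/2^N := by
            calc u + h < ((i:ℝ)+1)/2^N + ((k:ℝ)+1)/2^N := add_lt_add hu2 hh2
              _ = ((i:ℝ)+(k:ℝ)+1+1)/2^N := by ring
          have hik : i + k + 1 < M := by
            have h1 : ((i:ℝ)+(k:ℝ)+1)/2^N < 1 := lt_of_le_of_lt (le_trans hcase (by linarith [lt_of_le_of_lt hcase hlt])) hlt
            rw [div_lt_one hT] at h1
            have h3 : ((i+k+1 : ℕ):ℝ) < ((M:ℕ):ℝ) := by rw [hMC]; push_cast; linarith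
            exact_mod_cast h3
          refine ⟨i + k + 1, ?_, by omega, le_rfl, by omega⟩
          exact hσ (i+k+1) hik (u+h) (by push_cast; exact hcase)
            (by push_cast; exact hhigh)
    have hchain : dist (σ (u+h)) (σ u) ≤ ∑ j ∈ Finset.Ico i m, dist (x (j+1)) (x j) := by
      rw [hσm, hσu, dist_comm]
      refine le_trans (dist_le_Ico_sum_dist x him) ?_
      exact le_of_eq (Finset.sum_congr rfl fun j _ => dist_comm _ _)
    have hd2 : dist (σ (u+h)) (σ u) ^ p
        ≤ (∑ j ∈ Finset.Ico i m, dist (x (j+1)) (x j)) ^ p :=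
      Real.rpow_le_rpow dist_nonneg hchain (le_trans zero_le_one hp)
    have hpow : (∑ j ∈ Finset.Ico i m, dist (x (j+1)) (x j)) ^ p
        ≤ ((Finset.Ico i m).card : ℝ) ^ (p-1) * ∑ j ∈ Finset.Ico i m, d j :=
      Real.rpow_sum_le_const_mul_sum_rpow_of_nonneg _ hp (fun _ _ => dist_nonneg)
    have hcard : ((Finset.Ico i m).card : ℝ) ^ (p-1) ≤ C := by
      rw [hCdef]
      apply Real.rpow_le_rpow (by positivity) _ (by linarith)
      rw [Nat.card_Ico]
      have h5 : m - i ≤ k + 1 := by omega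
      calc ((m - i : ℕ):ℝ) ≤ ((k+1 : ℕ):ℝ) := by exact_mod_cast h5
        _ = (k:ℝ) + 1 := by push_cast; ring
    have hsubsum : ∑ j ∈ Finset.Ico i m, d j ≤ W i := by
      simp only [hWdef]
      apply Finset.sum_le_sum_of_subset_of_nonneg
      · exact Finset.Ico_subset_Ico le_rfl (by omega)
      · intro j _ _; exact hd0 j
    calc dist (σ (u+h)) (σ u) ^ p
        ≤ ((Finset.Ico i m).card : ℝ) ^ (p-1) * ∑ j ∈ Finset.Ico i m, d j :=
          le_trans hd2 hpow
      _ ≤ C * W i :=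
          mul_le_mul hcard hsubsum (Finset.sum_nonneg fun j _ => hd0 j) hC0
  -- covering
  have hcover : Icc (0:ℝ) (1-h) ⊆ ⋃ i : ℕ, B i := by
    intro u hu
    obtain ⟨hu0, hu1⟩ := hu
    set i := ⌊u * 2^N⌋₊ with hi
    have h0 : 0 ≤ u * 2^N := by positivity
    have hfl : (i:ℝ) ≤ u * 2^N := Nat.floor_le h0
    have hfu : u * 2^N < (i:ℝ) + 1 := Nat.lt_floor_add_one _
    refine mem_iUnion.mpr ⟨i, ?_⟩
    simp only [hBdef, mem_inter_iff, mem_Ico, mem_Icc]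
    refine ⟨⟨?_, ?_⟩, hu0, hu1⟩
    · rw [div_le_iff₀ hT]; linarith
    · rw [lt_div_iff₀ hT]; linarith
  have hmeasB : ∀ i, MeasurableSet (B i) := fun i =>
    measurableSet_Ico.inter measurableSet_Icc
  have step1 : ∫⁻ u in Icc (0:ℝ) (1 - h), ENNReal.ofReal (dist (σ (u + h)) (σ u) ^ p)
      ≤ ∑' i : ℕ, ∫⁻ u in B i, ENNReal.ofReal (dist (σ (u + h)) (σ u) ^ p) :=
    le_trans (lintegral_mono_set hcover) (lintegral_iUnion_le _ _)
  have hBempty : ∀ i, M ≤ i → B i = ∅ := by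
    intro i hiM
    apply eq_empty_iff_forall_notMem.mpr
    intro u hu
    simp only [hBdef, mem_inter_iff, mem_Ico, mem_Icc] at hu
    obtain ⟨⟨hu1, hu2⟩, hu3, hu4⟩ := hu
    have h4 : (1:ℝ) ≤ (i:ℝ)/2^N := by
      rw [le_div_iff₀ hT, one_mul]
      have h5 : ((M:ℕ):ℝ) ≤ (i:ℝ) := by exact_mod_cast hiM
      rw [hMC] at h5; linarith
    linarith
  have step2 : ∑' i : ℕ, ∫⁻ u in B i, ENNReal.ofReal (dist (σ (u + h)) (σ u) ^ p)
      = ∑ i ∈ Finset.range M, ∫⁻ u in B i, ENNReal.ofReal (dist (σ (u + h)) (σ u) ^ p) := by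
    apply tsum_eq_sum
    intro i hi
    rw [hBempty i (by simpa using hi)]
    simp
  have step3 : ∀ i ∈ Finset.range M,
      ∫⁻ u in B i, ENNReal.ofReal (dist (σ (u + h)) (σ u) ^ p)
        ≤ ENNReal.ofReal (C * W i * ((2:ℝ)^N)⁻¹) := by
    intro i hi
    rw [Finset.mem_range] at hi
    calc ∫⁻ u in B i, ENNReal.ofReal (dist (σ (u + h)) (σ u) ^ p)
        ≤ ∫⁻ _ in B i, ENNReal.ofReal (C * W i) := by
          apply setLIntegral_mono' (hmeasB i)
          intro u hu
          exact ENNReal.ofReal_le_ofReal (key i hi u hu)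
      _ = ENNReal.ofReal (C * W i) * volume (B i) := setLIntegral_const _ _
      _ ≤ ENNReal.ofReal (C * W i) * ENNReal.ofReal (((2:ℝ)^N)⁻¹) := by
          apply mul_le_mul_right
          calc volume (B i) ≤ volume (Ico ((i:ℝ)/2^N) (((i:ℝ)+1)/2^N)) :=
                measure_mono inter_subset_left
            _ = ENNReal.ofReal (((i:ℝ)+1)/2^N - (i:ℝ)/2^N) := Real.volume_Ico
            _ = ENNReal.ofReal (((2:ℝ)^N)⁻¹) := by
                congr 1; field_simp; ring
      _ = ENNReal.ofReal (C * W i * ((2:ℝ)^N)⁻¹) := by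
          rw [← ENNReal.ofReal_mul (mul_nonneg hC0 (hW0 i))]
  -- sum of window sums
  have hwin : ∑ i ∈ Finset.range M, W i ≤ ((k:ℝ)+1) * S := by
    set g : ℕ → ℝ := fun j => if j < M then d j else 0 with hg
    have hg0 : ∀ j, 0 ≤ g j := by
      intro j; simp only [hg]; split
      · exact hd0 j
      · exact le_refl 0
    have hWg : ∀ i, W i = ∑ t ∈ Finset.range (k+1), g (i + t) := by
      intro i
      have e0 : ∑ j ∈ Finset.Ico i (min (i+k+1) M), d j
          = ∑ j ∈ Finset.Ico i (min (i+k+1) M), g j := by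
        apply Finset.sum_congr rfl
        intro j hj
        rw [Finset.mem_Ico] at hj
        simp only [hg]
        rw [if_pos (by omega)]
      have e1 : ∑ j ∈ Finset.Ico i (min (i+k+1) M), g j
          = ∑ j ∈ Finset.Ico i (i+k+1), g j := by
        apply Finset.sum_subset (Finset.Ico_subset_Ico le_rfl (min_le_left _ _))
        intro j hj hj'
        rw [Finset.mem_Ico] at hj
        rw [Finset.mem_Ico] at hj'
        simp only [hg]
        rw [if_neg (by omega)]
      simp only [hWdef]
      rw [e0, e1, Finset.sum_Ico_eq_sum_range]
      have e2 : i + k + 1 - i = k + 1 := by omega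
      rw [e2]
    have hinner : ∀ t, ∑ i ∈ Finset.range M, g (i + t) ≤ S := by
      intro t
      have e1 : ∑ i ∈ Finset.range M, g (i + t) = ∑ j ∈ Finset.Ico t (M + t), g j := by
        rw [Finset.sum_Ico_eq_sum_range]
        have e2 : M + t - t = M := by omega
        rw [e2]
        exact Finset.sum_congr rfl fun i _ => by rw [Nat.add_comm]
      rw [e1]
      have e3 : ∑ j ∈ Finset.Ico t (M+t), g j ≤ ∑ j ∈ Finset.range (M+t), g j := by
        apply Finset.sum_le_sum_of_subset_of_nonneg
        · intro j hj
          rw [Finset.mem_Ico] at hj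
          exact Finset.mem_range.mpr hj.2
        · intro j _ _; exact hg0 j
      have e4 : ∑ j ∈ Finset.range (M+t), g j = ∑ j ∈ Finset.range M, g j := by
        symm
        apply Finset.sum_subset (Finset.range_subset_range.mpr (by omega))
        intro j _ hj'
        rw [Finset.mem_range] at hj'
        simp only [hg]
        rw [if_neg (by omega)]
      have e5 : ∑ j ∈ Finset.range M, g j = S := by
        rw [hSdef]
        apply Finset.sum_congr rfl
        intro j hj
        rw [Finset.mem_range] at hj
        simp only [hg]
        rw [if_pos hj]
      linarith
    calc ∑ i ∈ Finset.range M, W i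
        = ∑ i ∈ Finset.range M, ∑ t ∈ Finset.range (k+1), g (i+t) :=
          Finset.sum_congr rfl fun i _ => hWg i
      _ = ∑ t ∈ Finset.range (k+1), ∑ i ∈ Finset.range M, g (i+t) := Finset.sum_comm
      _ ≤ ∑ _t ∈ Finset.range (k+1), S := Finset.sum_le_sum fun t _ => hinner t
      _ = ((k:ℝ)+1) * S := by
          rw [Finset.sum_const, Finset.card_range, nsmul_eq_mul]
          push_cast; ring
  -- final real-number inequality
  have hinv : ((2:ℝ)^N)⁻¹ ≤ h / (k:ℝ) := by
    rw [inv_eq_one_div, div_le_div_iff₀ hT hk0, one_mul]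
    rw [div_le_iff₀ hT] at hh1
    linarith
  have hCk : C * ((k:ℝ)+1) = ((k:ℝ)+1)^p := by
    rw [hCdef, ← Real.rpow_add_one (by positivity : ((k:ℝ)+1) ≠ 0) (p-1)]
    norm_num
  have hfinal : ∑ i ∈ Finset.range M, C * W i * ((2:ℝ)^N)⁻¹
      ≤ h * (((k:ℝ)+1)^p/(k:ℝ)) * S := by
    have e1 : ∑ i ∈ Finset.range M, C * W i * ((2:ℝ)^N)⁻¹
        = C * ((2:ℝ)^N)⁻¹ * ∑ i ∈ Finset.range M, W i := by
      rw [Finset.mul_sum]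
      exact Finset.sum_congr rfl fun i _ => by ring
    rw [e1]
    have e2 : C * ((2:ℝ)^N)⁻¹ * ∑ i ∈ Finset.range M, W i
        ≤ C * ((2:ℝ)^N)⁻¹ * (((k:ℝ)+1) * S) := by
      apply mul_le_mul_of_nonneg_left hwin (by positivity)
    refine le_trans e2 ?_
    have e3 : C * ((2:ℝ)^N)⁻¹ * (((k:ℝ)+1) * S) = ((k:ℝ)+1)^p * S * ((2:ℝ)^N)⁻¹ := by
      rw [← hCk]; ring
    have e4 : h * (((k:ℝ)+1)^p/(k:ℝ)) * S = ((k:ℝ)+1)^p * S * (h/(k:ℝ)) := by ring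
    rw [e3, e4]
    exact mul_le_mul_of_nonneg_left hinv
      (mul_nonneg (Real.rpow_nonneg (by positivity) _) hS0)
  -- assemble
  calc ∫⁻ u in Icc (0:ℝ) (1 - h), ENNReal.ofReal (dist (σ (u + h)) (σ u) ^ p)
      ≤ ∑' i : ℕ, ∫⁻ u in B i, ENNReal.ofReal (dist (σ (u + h)) (σ u) ^ p) := step1
    _ = ∑ i ∈ Finset.range M, ∫⁻ u in B i, ENNReal.ofReal (dist (σ (u + h)) (σ u) ^ p) :=
        step2
    _ ≤ ∑ i ∈ Finset.range M, ENNReal.ofReal (C * W i * ((2:ℝ)^N)⁻¹) :=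
        Finset.sum_le_sum step3
    _ = ENNReal.ofReal (∑ i ∈ Finset.range M, C * W i * ((2:ℝ)^N)⁻¹) := by
        rw [← ENNReal.ofReal_sum_of_nonneg]
        intro i _
        exact mul_nonneg (mul_nonneg hC0 (hW0 i)) (by positivity)
    _ ≤ ENNReal.ofReal (h * (((k:ℝ)+1)^p/(k:ℝ)) * S) := ENNReal.ofReal_le_ofReal hfinal
end
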